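/- arXiv:2108.01888 — 13 statements merged into one kernel-verified Lean document; each statement's English description precedes it below -/
import Mathlib

section
/- Let p be an odd prime and G an n-vertex graph in F_n^p with adjacency matrix A. Let Q be a regular rational orthogonal matrix such that Qᵀ A Q is a symmetric 0-1 matrix with zero diagonal, and suppose the level of Q equals p. Then the integer matrix pQ has rank exactly 1 over ℤ/pℤ. -/
open Matrix BigOperators

/-- An adjacency matrix: a symmetric 0-1 integer matrix with zero diagonal. -/
def IsAdjacencyMat {n : ℕ} (A : Matrix (Fin n) (Fin n) ℤ) : Prop :=
  A.IsSymm ∧ (∀ i j, A i j = 0 ∨ A i j = 1) ∧ (∀ i, A i i = 0)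

/-- The walk matrix W = [e, Ae, ..., A^{n-1}e]. -/
def walkMatrix {n : ℕ} (A : Matrix (Fin n) (Fin n) ℤ) : Matrix (Fin n) (Fin n) ℤ :=
  Matrix.of fun i j => ((A ^ (j : ℕ)) *ᵥ fun _ => (1 : ℤ)) i

/-- The all-ones matrix J. -/
def allOnes (n : ℕ) : Matrix (Fin n) (Fin n) ℤ := Matrix.of fun _ _ => 1

/-- Two symmetric integer matrices are generalized cospectral if they are cospectral and
their "complements" J - I - · are cospectral. -/
def GenCospectral {n : ℕ} (A B : Matrix (Fin n) (Fin n) ℤ) : Prop :=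
  A.charpoly = B.charpoly ∧ (allOnes n - 1 - A).charpoly = (allOnes n - 1 - B).charpoly

/-- Two (adjacency) matrices are isomorphic if Pᵀ A P = B for some permutation matrix P. -/
def IsomorphicMat {n : ℕ} (A B : Matrix (Fin n) (Fin n) ℤ) : Prop :=
  ∃ σ : Equiv.Perm (Fin n),
    (σ.toPEquiv.toMatrix : Matrix (Fin n) (Fin n) ℤ)ᵀ * A * σ.toPEquiv.toMatrix = B

/-- A graph (given by its adjacency matrix) is determined by its generalized spectrum. -/
def IsDGS {n : ℕ} (A : Matrix (Fin n) (Fin n) ℤ) : Prop :=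
  ∀ B : Matrix (Fin n) (Fin n) ℤ, IsAdjacencyMat B → GenCospectral A B → IsomorphicMat A B

/-- Membership in the family F_n^p : det W = ±2^⌊n/2⌋ p² b with b odd square-free positive,
p ∤ b, and rank of W over ℤ/pℤ equals n - 1. -/
def MemF {n : ℕ} (p : ℕ) (A : Matrix (Fin n) (Fin n) ℤ) : Prop :=
  IsAdjacencyMat A ∧
  (∃ b : ℤ, 0 < b ∧ Odd b ∧ Squarefree b ∧ ¬ ((p : ℤ) ∣ b) ∧
    ((walkMatrix A).det = 2 ^ (n / 2) * (p : ℤ) ^ 2 * b ∨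
     (walkMatrix A).det = -(2 ^ (n / 2) * (p : ℤ) ^ 2 * b))) ∧
  ((walkMatrix A).map (Int.cast : ℤ → ZMod p)).rank = n - 1

/-- A regular orthogonal matrix: QᵀQ = I and Qe = e. -/
def IsRegularOrthogonal {n : ℕ} (Q : Matrix (Fin n) (Fin n) ℚ) : Prop :=
  Qᵀ * Q = 1 ∧ (Q *ᵥ fun _ => (1 : ℚ)) = fun _ => 1

/-- The level of a rational matrix Q is the smallest positive integer k
such that kQ is an integer matrix. -/
def HasLevel {n : ℕ} (Q : Matrix (Fin n) (Fin n) ℚ) (ℓ : ℕ) : Prop :=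
  IsLeast {k : ℕ | 0 < k ∧ ∀ i j, ∃ m : ℤ, (k : ℚ) * Q i j = (m : ℚ)} ℓ

/-- A primitive matrix: a regular rational orthogonal matrix of level p such that
the integer matrix pQ has rank 1 over ℤ/pℤ. -/
def IsPrimitiveMat {n : ℕ} (p : ℕ) (Q : Matrix (Fin n) (Fin n) ℚ) : Prop :=
  IsRegularOrthogonal Q ∧ HasLevel Q p ∧
  ∃ M : Matrix (Fin n) (Fin n) ℤ,
    M.map (Int.cast : ℤ → ℚ) = (p : ℚ) • Q ∧
    (M.map (Int.cast : ℤ → ZMod p)).rank = 1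

/-- A primitive matrix Q is generated from an integer vector v if every column of the
integer matrix pQ is congruent modulo p to an integer multiple of v. -/
def GeneratedFrom {n : ℕ} (p : ℕ) (Q : Matrix (Fin n) (Fin n) ℚ) (v : Fin n → ℤ) : Prop :=
  IsPrimitiveMat p Q ∧
  ∀ M : Matrix (Fin n) (Fin n) ℤ, M.map (Int.cast : ℤ → ℚ) = (p : ℚ) • Q →
    ∀ j, ∃ c : ℤ, ∀ i, ((M i j : ℤ) : ZMod p) = (c : ZMod p) * ((v i : ℤ) : ZMod p)

/-- w is a perfect p-representative of v: w ≡ v (mod p), wᵀe = p and wᵀw = p². -/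
def IsPerfectRep {n : ℕ} (p : ℕ) (v w : Fin n → ℤ) : Prop :=
  (∀ i, ((w i : ℤ) : ZMod p) = ((v i : ℤ) : ZMod p)) ∧
  (∑ i, w i) = (p : ℤ) ∧ (∑ i, w i * w i) = (p : ℤ) ^ 2

/-- u is the shortest p-representative of v: u ≡ v (mod p) and |uᵢ| ≤ (p-1)/2 for all i. -/
def IsShortestRep {n : ℕ} (p : ℕ) (v u : Fin n → ℤ) : Prop :=
  (∀ i, ((u i : ℤ) : ZMod p) = ((v i : ℤ) : ZMod p)) ∧ ∀ i, |u i| ≤ ((p : ℤ) - 1) / 2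

-- aux
lemma mapPowInt {n : ℕ} {R : Type*} [CommRing R] (A : Matrix (Fin n) (Fin n) ℤ) (k : ℕ) :
    (A ^ k).map (Int.cast : ℤ → R) = (A.map (Int.cast : ℤ → R)) ^ k := by
  simpa [RingHom.mapMatrix_apply] using map_pow ((Int.castRingHom R).mapMatrix) A k

lemma walkMapEntry {n : ℕ} {R : Type*} [CommRing R] (A : Matrix (Fin n) (Fin n) ℤ) (i j : Fin n) :
    ((walkMatrix A).map (Int.cast : ℤ → R)) i j
      = (((A.map (Int.cast : ℤ → R)) ^ (j : ℕ)) *ᵥ fun _ => (1 : R)) i := by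
  have h := RingHom.map_mulVec (Int.castRingHom R) (A ^ (j : ℕ)) (fun _ => 1) i
  simp only [walkMatrix, Matrix.map_apply, Matrix.of_apply]
  rw [show ((Int.castRingHom R) ∘ fun _ : Fin n => (1 : ℤ)) = fun _ => (1 : R) by
    funext; simp] at h
  rw [show ((A ^ (j:ℕ)).map (Int.castRingHom R)) = (A.map (Int.cast : ℤ → R)) ^ (j:ℕ) from
    mapPowInt A (j:ℕ)] at h
  exact h

theorem stmt3 (n p : ℕ) (hp : p.Prime) (hpodd : Odd p)
    (A : Matrix (Fin n) (Fin n) ℤ) (hA : MemF p A)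
    (Q : Matrix (Fin n) (Fin n) ℚ) (hQ : IsRegularOrthogonal Q)
    (B : Matrix (Fin n) (Fin n) ℤ) (hB : IsAdjacencyMat B)
    (hQAQ : Qᵀ * (A.map (Int.cast : ℤ → ℚ)) * Q = B.map (Int.cast : ℤ → ℚ))
    (hlevel : HasLevel Q p) :
    ∀ M : Matrix (Fin n) (Fin n) ℤ, M.map (Int.cast : ℤ → ℚ) = (p : ℚ) • Q →
      (M.map (Int.cast : ℤ → ZMod p)).rank = 1 := by
  haveI : Fact p.Prime := ⟨hp⟩
  intro M hM
  obtain ⟨hQorth, hQe⟩ := hQ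
  have hp0ℚ : (p : ℚ) ≠ 0 := Nat.cast_ne_zero.mpr hp.pos.ne'
  have hQQ : Q * Qᵀ = 1 := mul_eq_one_comm.mp hQorth
  have hQte : (Qᵀ *ᵥ fun _ => (1 : ℚ)) = fun _ => 1 := by
    have h : Qᵀ *ᵥ (Q *ᵥ fun _ => (1 : ℚ)) = fun _ => 1 := by
      rw [Matrix.mulVec_mulVec, hQorth, Matrix.one_mulVec]
    rwa [hQe] at h
  set Aq := A.map (Int.cast : ℤ → ℚ) with hAq
  set Bq := B.map (Int.cast : ℤ → ℚ) with hBq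
  have hcomm : ∀ k : ℕ, Qᵀ * Aq ^ k = Bq ^ k * Qᵀ := by
    intro k
    induction k with
    | zero => simp
    | succ k ih =>
      have h1 : Qᵀ * Aq ^ (k + 1) = (Qᵀ * Aq * Q) * (Qᵀ * Aq ^ k) := by
        rw [Matrix.mul_assoc (Qᵀ * Aq) Q (Qᵀ * Aq ^ k), ← Matrix.mul_assoc Q Qᵀ (Aq ^ k), hQQ,
          Matrix.one_mul, pow_succ', Matrix.mul_assoc]
      rw [h1, hQAQ, ih, ← Matrix.mul_assoc, ← pow_succ']
  have hW : Qᵀ * (walkMatrix A).map (Int.cast : ℤ → ℚ) = (walkMatrix B).map Int.cast := by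
    ext i j
    have l1 : (Qᵀ * (walkMatrix A).map (Int.cast : ℤ → ℚ)) i j
        = (Qᵀ *ᵥ ((Aq ^ (j : ℕ)) *ᵥ fun _ => (1 : ℚ))) i := by
      rw [Matrix.mul_apply]
      simp only [walkMapEntry, Matrix.mulVec, dotProduct, ← hAq]
    rw [l1, Matrix.mulVec_mulVec, hcomm, ← Matrix.mulVec_mulVec, hQte, walkMapEntry]
  -- integer identity
  have hPW : Mᵀ * walkMatrix A = (p : ℤ) • walkMatrix B := by
    have e1 : (Mᵀ * walkMatrix A).map (Int.cast : ℤ → ℚ)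
        = ((p : ℤ) • walkMatrix B).map (Int.cast : ℤ → ℚ) := by
      have h1 : (Mᵀ * walkMatrix A).map (Int.cast : ℤ → ℚ)
          = Mᵀ.map Int.cast * (walkMatrix A).map Int.cast := by
        simpa [RingHom.mapMatrix_apply] using
          map_mul ((Int.castRingHom ℚ).mapMatrix) Mᵀ (walkMatrix A)
      have h2 : Mᵀ.map (Int.cast : ℤ → ℚ) = (p : ℚ) • Qᵀ := by
        ext i j
        have h := congrFun (congrFun hM j) i
        simp only [Matrix.map_apply, Matrix.smul_apply, Matrix.transpose_apply,
          smul_eq_mul] at h ⊢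
        exact h
      have h3 : ((p : ℤ) • walkMatrix B).map (Int.cast : ℤ → ℚ)
          = (p : ℚ) • (walkMatrix B).map Int.cast := by
        ext i j
        simp only [Matrix.map_apply, Matrix.smul_apply, smul_eq_mul]
        push_cast
        ring
      rw [h1, h2, h3, Matrix.smul_mul, hW]
    ext i j
    have h := congrFun (congrFun e1 i) j
    simp only [Matrix.map_apply] at h
    exact Int.cast_injective h
  -- reduction mod p
  have hmod : (M.map (Int.cast : ℤ → ZMod p))ᵀ
      * (walkMatrix A).map (Int.cast : ℤ → ZMod p) = 0 := by
    ext i j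
    have h1 : (Mᵀ * walkMatrix A) i j = (p : ℤ) * walkMatrix B i j := by
      rw [hPW]; simp
    have h2 : (((Mᵀ * walkMatrix A) i j : ℤ) : ZMod p) = 0 := by
      rw [h1]; push_cast; simp [ZMod.natCast_self]
    rw [Matrix.mul_apply] at h2
    push_cast at h2
    rw [Matrix.mul_apply, Matrix.zero_apply]
    simpa [Matrix.map_apply, Matrix.transpose_apply] using h2
  -- rank bound from above
  have hrk_le : ((M.map (Int.cast : ℤ → ZMod p))ᵀ).rank
      + ((walkMatrix A).map (Int.cast : ℤ → ZMod p)).rank ≤ n := by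
    simpa using Matrix.rank_add_rank_le_card_of_mul_eq_zero hmod
  have hWrank := hA.2.2
  have hrkT : ((M.map (Int.cast : ℤ → ZMod p))ᵀ).rank
      = (M.map (Int.cast : ℤ → ZMod p)).rank := Matrix.rank_transpose _
  -- M mod p nonzero
  have hMne : M.map (Int.cast : ℤ → ZMod p) ≠ 0 := by
    intro h0
    have hdvd : ∀ i j, (p : ℤ) ∣ M i j := by
      intro i j
      have h := congrFun (congrFun h0 i) j
      simp only [Matrix.map_apply, Matrix.zero_apply] at h
      exact_mod_cast (ZMod.intCast_zmod_eq_zero_iff_dvd _ _).mp h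
    have h1mem : (1 : ℕ) ∈ {k : ℕ | 0 < k ∧ ∀ i j, ∃ m : ℤ, (k : ℚ) * Q i j = (m : ℚ)} := by
      refine ⟨one_pos, fun i j => ?_⟩
      obtain ⟨c, hc⟩ := hdvd i j
      refine ⟨c, ?_⟩
      have hQij : (M i j : ℚ) = (p : ℚ) * Q i j := by
        have h := congrFun (congrFun hM i) j
        simpa [Matrix.map_apply] using h
      have : (p : ℚ) * Q i j = (p : ℚ) * (c : ℚ) := by
        rw [← hQij, hc]; push_cast; ring
      push_cast
      rw [one_mul]
      exact mul_left_cancel₀ hp0ℚ this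
    have := hlevel.2 h1mem
    have := hp.two_le
    omega
  -- rank positive
  have hrk_pos : 0 < (M.map (Int.cast : ℤ → ZMod p)).rank := by
    rcases Nat.eq_zero_or_pos (M.map (Int.cast : ℤ → ZMod p)).rank with h | h
    swap
    · exact h
    · exfalso
      apply hMne
      have hbot : LinearMap.range (M.map (Int.cast : ℤ → ZMod p)).mulVecLin = ⊥ :=
        Submodule.finrank_eq_zero.mp h
      ext i j
      have hcol : (M.map (Int.cast : ℤ → ZMod p)) *ᵥ Pi.single j 1 = 0 := by
        have : (M.map (Int.cast : ℤ → ZMod p)).mulVecLin (Pi.single j 1)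
            ∈ LinearMap.range (M.map (Int.cast : ℤ → ZMod p)).mulVecLin :=
          LinearMap.mem_range_self _ _
        rw [hbot] at this
        simpa [Matrix.mulVecLin] using this
      have := congrFun hcol i
      simpa [Matrix.mulVec_single] using this
  -- conclude
  have : (M.map (Int.cast : ℤ → ZMod p)).rank + (n - 1) ≤ n := by
    rw [← hWrank, ← hrkT]; exact hrk_le
  have hn : 1 ≤ n := by
    by_contra hn
    push_neg at hn
    interval_cases n
    · exact absurd hrk_pos (by
        have : (M.map (Int.cast : ℤ → ZMod p)).rank ≤ 0 := by
          simpa using Matrix.rank_le_card_width (M.map (Int.cast : ℤ → ZMod p))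
        omega)
  omega
end

section
/- Let p be an odd prime and Q an n×n primitive matrix. If some entry of Q is not an integer, then there exist permutations σ and τ of the index set and an index k such that the matrix Q' obtained from Q by permuting rows according to σ and columns according to τ has the quasi-diagonal form diag[Q₀, I]: the top-left k×k block Q₀ is a primitive matrix none of whose entries is an integer, the bottom-right (n−k)×(n−k) block is the identity, and all other entries of Q' are zero. -/
open Matrix BigOperators

/-- auxiliary: a unit-norm rational vector with entry 1 at j is zero elsewhere -/
lemma aux_unit_row {n : ℕ} (r : Fin n → ℚ) (h2 : ∑ j, r j * r j = 1) {j : Fin n}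
    (hj : r j = 1) : ∀ j', j' ≠ j → r j' = 0 := by
  have hsplit : r j * r j + ∑ j' ∈ Finset.univ.erase j, r j' * r j' = 1 := by
    rw [Finset.add_sum_erase Finset.univ (fun x => r x * r x) (Finset.mem_univ j)]; exact h2
  rw [hj, one_mul] at hsplit
  have h0 : ∑ j' ∈ Finset.univ.erase j, r j' * r j' = 0 := by linarith
  intro j' hj'
  have := (Finset.sum_eq_zero_iff_of_nonneg (fun x _ => mul_self_nonneg (r x))).1 h0 j'
    (Finset.mem_erase.2 ⟨hj', Finset.mem_univ j'⟩)
  exact mul_self_eq_zero.mp this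

/-- auxiliary: an integer vector with sum 1 and sum of squares 1 has an entry 1 -/
lemma aux_int_row {n : ℕ} (r : Fin n → ℚ) (h1 : ∑ j, r j = 1) (h2 : ∑ j, r j * r j = 1)
    (hint : ∀ j, ∃ m : ℤ, r j = (m : ℚ)) : ∃ j, r j = 1 := by
  have key : ∀ j, r j = 0 ∨ r j = 1 := by
    have hle : ∀ j ∈ Finset.univ, (0:ℚ) ≤ r j * r j - r j := by
      intro j _
      obtain ⟨m, hm⟩ := hint j
      have : (m:ℤ) ≤ m * m := by nlinarith [sq_nonneg (m - 1), sq_nonneg m]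
      rw [hm]
      have : (m:ℚ) ≤ (m:ℚ) * m := by exact_mod_cast this
      linarith
    have hsum0 : ∑ j, (r j * r j - r j) = 0 := by
      rw [Finset.sum_sub_distrib, h1, h2, sub_self]
    intro j
    have hj := (Finset.sum_eq_zero_iff_of_nonneg hle).1 hsum0 j (Finset.mem_univ j)
    have hjj : r j * r j = r j := by linarith
    have : r j * (r j - 1) = 0 := by ring_nf; linarith [hjj]
    rcases mul_eq_zero.mp this with h | h
    · exact Or.inl h
    · exact Or.inr (by linarith)
  by_contra hno
  push_neg at hno
  have : ∑ j, r j = 0 := Finset.sum_eq_zero (fun j _ => (key j).resolve_right (hno j))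
  rw [h1] at this; norm_num at this

/-- auxiliary sum splitting -/
lemma aux_sum_split {n : ℕ} {M : Type*} [AddCommMonoid M] (P : Fin n → Prop) [DecidablePred P]
    (g : Fin n → M) :
    ∑ i, g i = (∑ x : {i // P i}, g x) + ∑ x : {i // ¬ P i}, g x := by
  rw [← Equiv.sum_comp (Equiv.sumCompl P) g, Fintype.sum_sum_type]
  rfl

set_option maxHeartbeats 2000000 in
theorem stmt4 (n p : ℕ) (hp : p.Prime) (hpodd : Odd p)
    (Q : Matrix (Fin n) (Fin n) ℚ) (hQ : IsPrimitiveMat p Q)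
    (hnonint : ∃ i j, ∀ m : ℤ, Q i j ≠ (m : ℚ)) :
    ∃ (σ τ : Equiv.Perm (Fin n)) (k : ℕ), k ≤ n ∧
      ∃ Q₀ : Matrix (Fin k) (Fin k) ℚ,
        IsPrimitiveMat p Q₀ ∧ (∀ i j, ∀ m : ℤ, Q₀ i j ≠ (m : ℚ)) ∧
        ∀ i j : Fin n,
          Q (σ i) (τ j) =
            if hi : (i : ℕ) < k then
              (if hj : (j : ℕ) < k then Q₀ ⟨i, hi⟩ ⟨j, hj⟩ else 0)
            else
              (if (j : ℕ) < k then 0 else if (i : ℕ) = (j : ℕ) then 1 else 0) := by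
  obtain ⟨⟨hQo, hQe⟩, _hQlev, M, hM, hrank⟩ := hQ
  haveI : Fact p.Prime := ⟨hp⟩
  -- rank-one decomposition
  set N := M.map (Int.cast : ℤ → ZMod p) with hN
  have h1 : Module.finrank (ZMod p) (LinearMap.range N.mulVecLin) = 1 := hrank
  obtain ⟨v0, hv0ne, hv0⟩ := finrank_eq_one_iff'.mp h1
  set v : Fin n → ZMod p := (v0 : Fin n → ZMod p) with hv
  have hcol : ∀ j, ∃ c : ZMod p, ∀ i, N i j = v i * c := by
    intro j
    have hmem : (fun i => N i j) ∈ LinearMap.range N.mulVecLin := by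
      refine ⟨Pi.single j 1, ?_⟩
      ext i
      simp [Matrix.mulVecLin_apply, Matrix.mulVec, dotProduct, Pi.single_apply]
    obtain ⟨c, hc⟩ := hv0 ⟨_, hmem⟩
    refine ⟨c, fun i => ?_⟩
    have hc' : c • v = fun i => N i j := congrArg Subtype.val hc
    have := congrFun hc' i
    simp only [Pi.smul_apply, smul_eq_mul] at this
    rw [← this]; ring
  choose w hw using hcol
  -- dictionary
  have hMQ : ∀ i j, ((M i j : ℤ) : ℚ) = (p:ℚ) * Q i j := by
    intro i j
    have := congrFun (congrFun hM i) j
    simpa [Matrix.map_apply] using this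
  have hdict : ∀ i j, (∃ m : ℤ, Q i j = (m:ℚ)) ↔ v i * w j = 0 := by
    intro i j
    constructor
    · rintro ⟨m, hm⟩
      have h2 : (M i j : ℚ) = ((p * m : ℤ) : ℚ) := by rw [hMQ i j, hm]; push_cast; ring
      have h3 : M i j = (p:ℤ) * m := by exact_mod_cast h2
      have : ((M i j : ℤ) : ZMod p) = 0 := by
        rw [h3]; push_cast; simp
      rw [← hw j i, hN]; simpa [Matrix.map_apply] using this
    · intro h0
      have : ((M i j : ℤ) : ZMod p) = 0 := by
        have := hw j i; simp only [hN, Matrix.map_apply] at this; rw [this, h0]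
      obtain ⟨m, hm⟩ := (ZMod.intCast_zmod_eq_zero_iff_dvd _ _).mp this
      refine ⟨m, ?_⟩
      have hp0 : (p:ℚ) ≠ 0 := by exact_mod_cast hp.ne_zero
      have : (p:ℚ) * Q i j = (p:ℚ) * m := by
        rw [← hMQ i j, hm]; push_cast; ring
      exact mul_left_cancel₀ hp0 this
  -- orthogonality facts
  have hQQt : Q * Qᵀ = 1 := mul_eq_one_comm.mp hQo
  have hrownorm : ∀ a, ∑ b, Q a b * Q a b = 1 := by
    intro a
    have := congrFun (congrFun hQQt a) a
    simpa [Matrix.mul_apply, Matrix.transpose_apply, Matrix.one_apply] using this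
  have hcolnorm : ∀ b, ∑ a, Q a b * Q a b = 1 := by
    intro b
    have := congrFun (congrFun hQo b) b
    simpa [Matrix.mul_apply, Matrix.transpose_apply, Matrix.one_apply] using this
  have hrowsum : ∀ a, ∑ b, Q a b = 1 := by
    intro a
    have := congrFun hQe a
    simpa [Matrix.mulVec, dotProduct] using this
  have hcolsum : ∀ b, ∑ a, Q a b = 1 := by
    intro b
    have h2 : (Qᵀ *ᵥ fun _ => (1:ℚ)) = fun _ => 1 := by
      rw [← hQe, Matrix.mulVec_mulVec, hQo, Matrix.one_mulVec, hQe]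
    have := congrFun h2 b
    simpa [Matrix.mulVec, dotProduct, Matrix.transpose_apply] using this
  -- unique-one lemmas
  have huniqrow : ∀ a b, Q a b = 1 → ∀ b', b' ≠ b → Q a b' = 0 := by
    intro a b hab
    exact aux_unit_row (fun x => Q a x) (hrownorm a) hab
  have huniqcol : ∀ a b, Q a b = 1 → ∀ a', a' ≠ a → Q a' b = 0 := by
    intro a b hab
    exact aux_unit_row (fun x => Q x b) (hcolnorm b) hab
  -- nonintegrality witness
  obtain ⟨i₀, j₀, hni⟩ := hnonint
  have hvw₀ : v i₀ ≠ 0 ∧ w j₀ ≠ 0 := by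
    have : ¬ (v i₀ * w j₀ = 0) := fun h => by
      obtain ⟨m, hm⟩ := (hdict i₀ j₀).mpr h
      exact hni m hm
    exact ⟨fun h => this (by rw [h, zero_mul]), fun h => this (by rw [h, mul_zero])⟩
  -- rows with v=0 are integral, have a unique 1
  have hintrow : ∀ a, v a = 0 → ∃ b, Q a b = 1 := by
    intro a ha
    refine aux_int_row (fun b => Q a b) (hrowsum a) (hrownorm a) (fun b => ?_)
    exact (hdict a b).mpr (by rw [ha, zero_mul])
  have hintcol : ∀ b, w b = 0 → ∃ a, Q a b = 1 := by
    intro b hb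
    refine aux_int_row (fun a => Q a b) (hcolsum b) (hcolnorm b) (fun a => ?_)
    exact (hdict a b).mpr (by rw [hb, mul_zero])
  -- structural facts
  choose f hf using hintrow
  choose g hg using hintcol
  have hfw : ∀ a (ha : v a = 0), w (f a ha) = 0 := by
    intro a ha
    by_contra hw0
    have hne : i₀ ≠ a := fun h => hvw₀.1 (h ▸ ha)
    have h0 : Q i₀ (f a ha) = 0 := huniqcol a (f a ha) (hf a ha) i₀ hne
    have hnz : v i₀ * w (f a ha) ≠ 0 := mul_ne_zero hvw₀.1 hw0
    exact hnz ((hdict _ _).mp ⟨0, by rw [h0]; norm_num⟩)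
  have hgv : ∀ b (hb : w b = 0), v (g b hb) = 0 := by
    intro b hb
    by_contra hv0'
    have hne : j₀ ≠ b := fun h => hvw₀.2 (h ▸ hb)
    have h0 : Q (g b hb) j₀ = 0 := huniqrow (g b hb) b (hg b hb) j₀ hne
    have hnz : v (g b hb) * w j₀ ≠ 0 := mul_ne_zero hv0' hvw₀.2
    exact hnz ((hdict _ _).mp ⟨0, by rw [h0]; norm_num⟩)
  -- zero blocks
  have hZ1 : ∀ a b, v a ≠ 0 → w b = 0 → Q a b = 0 := by
    intro a b hva hwb
    have hne : a ≠ g b hwb := fun h => hva (h ▸ hgv b hwb)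
    exact huniqcol (g b hwb) b (hg b hwb) a hne
  have hZ2 : ∀ a b, v a = 0 → w b ≠ 0 → Q a b = 0 := by
    intro a b hva hwb
    have hne : b ≠ f a hva := fun h => hwb (h ▸ hfw a hva)
    exact huniqrow a (f a hva) (hf a hva) b hne
  -- the equivalence between complements
  classical
  have hF : ∃ F : {x : Fin n // ¬ v x ≠ 0} ≃ {y : Fin n // ¬ w y ≠ 0}, ∀ x, Q x.1 (F x).1 = 1 := by
    refine ⟨Equiv.ofBijective
      (fun x => ⟨f x.1 (not_not.mp x.2), by simp only [not_not]; exact hfw _ _⟩) ⟨?_, ?_⟩, ?_⟩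
    · rintro ⟨a, ha⟩ ⟨a', ha'⟩ hEq
      simp only [Subtype.mk.injEq] at hEq ⊢
      by_contra hne
      have hne2 : a' ≠ a := fun h => hne h.symm
      have h2' : Q a' (f a (not_not.mp ha)) = 1 := by rw [hEq]; exact hf _ _
      have := huniqcol a (f a (not_not.mp ha)) (hf _ _) a' hne2
      rw [h2'] at this; norm_num at this
    · rintro ⟨b, hb⟩
      have hb0 := not_not.mp hb
      refine ⟨⟨g b hb0, not_not.mpr (hgv b hb0)⟩, ?_⟩
      apply Subtype.ext
      simp only
      by_contra hne
      have := huniqrow (g b hb0) (f (g b hb0) (not_not.mp (not_not.mpr (hgv b hb0))))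
        (hf _ _) b (fun h => hne h.symm)
      rw [hg b hb0] at this; norm_num at this
    · intro x; exact hf _ _
  obtain ⟨F, hFQ⟩ := hF
  set P : Fin n → Prop := fun i => v i ≠ 0 with hP
  set Pw : Fin n → Prop := fun j => w j ≠ 0 with hPw
  set k := Fintype.card {x // P x} with hk
  have hkn : k ≤ n := by simpa using Fintype.card_subtype_le P
  have hk1 : 1 ≤ k := by
    have : Nonempty {x // P x} := ⟨⟨i₀, hvw₀.1⟩⟩
    rw [hk]; exact Fintype.card_pos
  have hcardSc : Fintype.card {x // ¬ P x} = n - k := by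
    rw [Fintype.card_subtype_compl, Fintype.card_fin, hk]
  have hcardT : Fintype.card {y // Pw y} = k := by
    have h2 : Fintype.card {y // ¬ Pw y} = n - Fintype.card {y // Pw y} := by
      rw [Fintype.card_subtype_compl, Fintype.card_fin]
    have h3 : Fintype.card {x // ¬ P x} = Fintype.card {y // ¬ Pw y} := Fintype.card_congr F
    have h4 : Fintype.card {y // Pw y} ≤ n := by simpa using Fintype.card_subtype_le Pw
    omega
  have hsum : k + (n - k) = n := by omega
  set eS : Fin k ≃ {x // P x} := (Fintype.equivFinOfCardEq hk.symm).symm with heS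
  set eSc : Fin (n - k) ≃ {x // ¬ P x} := (Fintype.equivFinOfCardEq hcardSc).symm with heSc
  set eT : Fin k ≃ {y // Pw y} := (Fintype.equivFinOfCardEq hcardT).symm with heT
  set σ : Equiv.Perm (Fin n) := (finCongr hsum.symm).trans ((finSumFinEquiv.symm).trans
     ((eS.sumCongr eSc).trans (Equiv.sumCompl P))) with hσ
  set τ : Equiv.Perm (Fin n) := (finCongr hsum.symm).trans ((finSumFinEquiv.symm).trans
     ((eT.sumCongr (eSc.trans F)).trans (Equiv.sumCompl Pw))) with hτ
  have hσlt : ∀ (i : Fin n) (hi : (i:ℕ) < k), σ i = (eS ⟨i, hi⟩ : Fin n) := by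
    intro i hi
    rw [hσ]
    simp only [Equiv.trans_apply]
    rw [show finCongr hsum.symm i = Fin.castAdd (n - k) ⟨(i:ℕ), hi⟩ from rfl,
      finSumFinEquiv_symm_apply_castAdd]
    rfl
  have hσge : ∀ (i : Fin n) (hi : ¬ (i:ℕ) < k),
      σ i = (eSc ⟨(i:ℕ) - k, by have := i.isLt; omega⟩ : Fin n) := by
    intro i hi
    rw [hσ]
    simp only [Equiv.trans_apply]
    rw [show finCongr hsum.symm i = Fin.natAdd k ⟨(i:ℕ) - k, by have := i.isLt; omega⟩ from
        (by apply Fin.ext; simp [Fin.natAdd]; omega),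
      finSumFinEquiv_symm_apply_natAdd]
    rfl
  have hτlt : ∀ (j : Fin n) (hj : (j:ℕ) < k), τ j = (eT ⟨j, hj⟩ : Fin n) := by
    intro j hj
    rw [hτ]
    simp only [Equiv.trans_apply]
    rw [show finCongr hsum.symm j = Fin.castAdd (n - k) ⟨(j:ℕ), hj⟩ from rfl,
      finSumFinEquiv_symm_apply_castAdd]
    rfl
  have hτge : ∀ (j : Fin n) (hj : ¬ (j:ℕ) < k),
      τ j = (F (eSc ⟨(j:ℕ) - k, by have := j.isLt; omega⟩) : Fin n) := by
    intro j hj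
    rw [hτ]
    simp only [Equiv.trans_apply]
    rw [show finCongr hsum.symm j = Fin.natAdd k ⟨(j:ℕ) - k, by have := j.isLt; omega⟩ from
        (by apply Fin.ext; simp [Fin.natAdd]; omega),
      finSumFinEquiv_symm_apply_natAdd]
    rfl
  set Q₀ : Matrix (Fin k) (Fin k) ℚ := Matrix.of (fun a b => Q (eS a).1 (eT b).1) with hQ₀def
  have hQ₀ni : ∀ (a b : Fin k) (m : ℤ), Q₀ a b ≠ (m:ℚ) := by
    intro a b m hm
    exact mul_ne_zero (eS a).2 (eT b).2 ((hdict (eS a).1 (eT b).1).mp ⟨m, hm⟩)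
  have hblock : ∀ i j : Fin n,
      Q (σ i) (τ j) =
        if hi : (i : ℕ) < k then
          (if hj : (j : ℕ) < k then Q₀ ⟨i, hi⟩ ⟨j, hj⟩ else 0)
        else
          (if (j : ℕ) < k then 0 else if (i : ℕ) = (j : ℕ) then 1 else 0) := by
    intro i j
    by_cases hi : (i:ℕ) < k
    · rw [dif_pos hi, hσlt i hi]
      by_cases hj : (j:ℕ) < k
      · rw [dif_pos hj, hτlt j hj]; rfl
      · rw [dif_neg hj, hτge j hj]
        exact hZ1 _ _ (eS ⟨i, hi⟩).2 (not_not.mp (F _).2)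
    · rw [dif_neg hi, hσge i hi]
      by_cases hj : (j:ℕ) < k
      · rw [if_pos hj, hτlt j hj]
        exact hZ2 _ _ (not_not.mp (eSc _).2) (eT ⟨j, hj⟩).2
      · rw [if_neg hj, hτge j hj]
        by_cases hij : (i:ℕ) = (j:ℕ)
        · rw [if_pos hij]
          have hx : (⟨(j:ℕ) - k, by have := j.isLt; omega⟩ : Fin (n - k))
              = ⟨(i:ℕ) - k, by have := i.isLt; omega⟩ := by apply Fin.ext; simp; omega
          rw [hx]
          exact hFQ (eSc ⟨(i:ℕ) - k, by have := i.isLt; omega⟩)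
        · rw [if_neg hij]
          have hne : (F (eSc ⟨(j:ℕ) - k, by have := j.isLt; omega⟩) : Fin n)
              ≠ (F (eSc ⟨(i:ℕ) - k, by have := i.isLt; omega⟩) : Fin n) := by
            intro h
            have h2 := eSc.injective (F.injective (Subtype.ext h))
            have h3 := congrArg Fin.val h2
            simp only at h3
            omega
          exact huniqrow _ _ (hFQ (eSc ⟨(i:ℕ) - k, by have := i.isLt; omega⟩)) _ hne
  -- orthogonality of Q₀
  have horthsum : ∀ b b' : Fin k, (∑ r : Fin n, Q r (eT b).1 * Q r (eT b').1)
      = if b = b' then 1 else 0 := by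
    intro b b'
    have h1 := congrFun (congrFun hQo (eT b : Fin n)) (eT b' : Fin n)
    simp only [Matrix.mul_apply, Matrix.transpose_apply, Matrix.one_apply] at h1
    rw [h1]
    by_cases h : b = b'
    · subst h; simp
    · rw [if_neg h, if_neg (fun hh => h (eT.injective (Subtype.ext hh)))]
  have hQ₀o : Q₀ᵀ * Q₀ = 1 := by
    ext b b'
    rw [Matrix.mul_apply, Matrix.one_apply]
    simp only [hQ₀def, Matrix.transpose_apply, Matrix.of_apply]
    calc ∑ a : Fin k, Q (eS a).1 (eT b).1 * Q (eS a).1 (eT b').1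
        = ∑ x : {i // P i}, Q x.1 (eT b).1 * Q x.1 (eT b').1 :=
          Equiv.sum_comp eS (fun x => Q x.1 (eT b).1 * Q x.1 (eT b').1)
      _ = ∑ r : Fin n, Q r (eT b).1 * Q r (eT b').1 := by
          rw [aux_sum_split P (fun r => Q r (eT b).1 * Q r (eT b').1),
            Finset.sum_eq_zero
              (fun (x : {i : Fin n // ¬ P i}) (_ : x ∈ Finset.univ) =>
                by rw [hZ2 x.1 (eT b).1 (not_not.mp x.2) (eT b).2, zero_mul]),
            add_zero]
      _ = if b = b' then 1 else 0 := horthsum b b'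
  have hQ₀e : (Q₀ *ᵥ fun _ => (1:ℚ)) = fun _ => 1 := by
    funext a
    simp only [Matrix.mulVec, dotProduct, mul_one, hQ₀def, Matrix.of_apply]
    calc ∑ b : Fin k, Q (eS a).1 (eT b).1
        = ∑ y : {y // Pw y}, Q (eS a).1 y.1 := Equiv.sum_comp eT (fun y => Q (eS a).1 y.1)
      _ = ∑ c : Fin n, Q (eS a).1 c := by
          rw [aux_sum_split Pw (fun c => Q (eS a).1 c),
            Finset.sum_eq_zero (fun (y : {j : Fin n // ¬ Pw j}) (_ : y ∈ Finset.univ) =>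
              hZ1 _ _ (eS a).2 (not_not.mp y.2)), add_zero]
      _ = 1 := hrowsum _
  -- level of Q₀
  have hMQ₀ : ∀ a b : Fin k, ((M (eS a).1 (eT b).1 : ℤ) : ℚ) = (p:ℚ) * Q₀ a b := by
    intro a b; exact hMQ _ _
  have hlev : HasLevel Q₀ p := by
    constructor
    · exact ⟨hp.pos, fun a b => ⟨M (eS a).1 (eT b).1, (hMQ₀ a b).symm⟩⟩
    · rintro k' ⟨hk'p, hk'i⟩
      by_contra hlt
      push_neg at hlt
      rcases hp.eq_one_or_self_of_dvd _ (Nat.gcd_dvd_left p k') with hg | hg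
      · set a0 : Fin k := ⟨0, hk1⟩
        obtain ⟨m, hm⟩ := hk'i a0 a0
        have hbez := Nat.gcd_eq_gcd_ab p k'
        rw [hg] at hbez
        have hb : (1:ℚ) = (p:ℚ) * ((Nat.gcdA p k' : ℤ) : ℚ) + (k':ℚ) * ((Nat.gcdB p k' : ℤ) : ℚ) := by
          exact_mod_cast congrArg (Int.cast : ℤ → ℚ) hbez
        have hint : Q₀ a0 a0 = ((Nat.gcdA p k' * M (eS a0).1 (eT a0).1 + Nat.gcdB p k' * m : ℤ) : ℚ) := by
          calc Q₀ a0 a0 = ((p:ℚ) * ((Nat.gcdA p k' : ℤ):ℚ) + (k':ℚ) * ((Nat.gcdB p k' : ℤ):ℚ)) * Q₀ a0 a0 := by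
                rw [← hb, one_mul]
            _ = ((Nat.gcdA p k' : ℤ):ℚ) * ((p:ℚ) * Q₀ a0 a0) + ((Nat.gcdB p k' : ℤ):ℚ) * ((k':ℚ) * Q₀ a0 a0) := by ring
            _ = _ := by rw [← hMQ₀ a0 a0, hm]; push_cast; ring
        exact hQ₀ni a0 a0 _ hint
      · have hdv : p ∣ k' := hg ▸ Nat.gcd_dvd_right p k'
        exact absurd (Nat.le_of_dvd hk'p hdv) (by omega)
  -- rank of pQ₀ mod p
  set M₀ : Matrix (Fin k) (Fin k) ℤ := Matrix.of (fun a b => M (eS a).1 (eT b).1) with hM₀def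
  have hM₀map : M₀.map (Int.cast : ℤ → ℚ) = (p : ℚ) • Q₀ := by
    ext a b
    simp only [hM₀def, Matrix.map_apply, Matrix.of_apply, Matrix.smul_apply, smul_eq_mul]
    exact hMQ₀ a b
  have hrank₀ : (M₀.map (Int.cast : ℤ → ZMod p)).rank = 1 := by
    set N₀ := M₀.map (Int.cast : ℤ → ZMod p) with hN₀
    set v' : Fin k → ZMod p := fun a => v (eS a).1 with hv'
    have hN₀vw : ∀ a b, N₀ a b = v' a * w (eT b).1 := fun a b => hw _ _
    have hv'ne : v' ≠ 0 := fun h => (eS ⟨0, hk1⟩).2 (congrFun h ⟨0, hk1⟩)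
    have hrange : LinearMap.range N₀.mulVecLin = Submodule.span (ZMod p) {v'} := by
      apply le_antisymm
      · rintro y ⟨x, rfl⟩
        rw [Matrix.mulVecLin_apply]
        have hsm : N₀ *ᵥ x = (∑ b, w (eT b).1 * x b) • v' := by
          funext a
          simp only [Matrix.mulVec, dotProduct, Pi.smul_apply, smul_eq_mul]
          rw [Finset.sum_mul]
          refine Finset.sum_congr rfl (fun b _ => ?_)
          rw [hN₀vw]; ring
        rw [hsm]
        exact Submodule.smul_mem _ _ (Submodule.mem_span_singleton_self v')
      · rw [Submodule.span_le, Set.singleton_subset_iff]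
        refine ⟨Pi.single ⟨0, hk1⟩ (w (eT ⟨0, hk1⟩).1)⁻¹, ?_⟩
        rw [Matrix.mulVecLin_apply]
        funext a
        simp only [Matrix.mulVec, dotProduct]
        rw [Finset.sum_eq_single (⟨0, hk1⟩ : Fin k)]
        · rw [hN₀vw, Pi.single_eq_same, mul_assoc, mul_inv_cancel₀ (eT ⟨0, hk1⟩).2, mul_one]
        · intro b _ hb; rw [Pi.single_eq_of_ne hb, mul_zero]
        · intro h; exact absurd (Finset.mem_univ _) h
    rw [Matrix.rank, hrange]
    exact finrank_span_singleton hv'ne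
  exact ⟨σ, τ, k, hkn, Q₀, ⟨⟨hQ₀o, hQ₀e⟩, hlev, M₀, hM₀map, hrank₀⟩, hQ₀ni, hblock⟩
end

section
/- Let p be an odd prime and let u and v be two n-dimensional integer column vectors each of whose entries is nonzero modulo p. Suppose that (i) u and v are linearly dependent over ℤ/pℤ, (ii) u ≠ v and u ≠ −v, and (iii) uᵀu = vᵀv = p². Then uᵀv = 0. -/
open Matrix BigOperators

theorem stmt6 (n p : ℕ) (hp : p.Prime) (hpodd : Odd p)
    (u v : Fin n → ℤ)
    (hu : ∀ i, ((u i : ℤ) : ZMod p) ≠ 0) (hv : ∀ i, ((v i : ℤ) : ZMod p) ≠ 0)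
    (hdep : ∃ a b : ℤ, ¬ (((a : ℤ) : ZMod p) = 0 ∧ ((b : ℤ) : ZMod p) = 0) ∧
      ∀ i, ((a * u i + b * v i : ℤ) : ZMod p) = 0)
    (hne : u ≠ v) (hne' : u ≠ -v)
    (huu : (∑ i, u i * u i) = (p : ℤ) ^ 2) (hvv : (∑ i, v i * v i) = (p : ℤ) ^ 2) :
    (∑ i, u i * v i) = 0 := by
  haveI := Fact.mk hp
  have hp0 : (p : ℤ) ≠ 0 := by exact_mod_cast hp.ne_zero
  have hn : n ≠ 0 := by
    rintro rfl
    simp at huu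
    exact pow_ne_zero 2 hp0 huu.symm
  obtain ⟨i0⟩ : Nonempty (Fin n) := ⟨⟨0, Nat.pos_of_ne_zero hn⟩⟩
  obtain ⟨a, b, hab, hzero⟩ := hdep
  have hb : (b : ZMod p) ≠ 0 := by
    intro hb0
    have h := hzero i0
    push_cast at h
    rw [hb0, zero_mul, add_zero] at h
    rcases mul_eq_zero.mp h with ha0 | h0
    · exact hab ⟨ha0, hb0⟩
    · exact hu i0 h0
  have ha : (a : ZMod p) ≠ 0 := by
    intro ha0
    have h := hzero i0
    push_cast at h
    rw [ha0, zero_mul, zero_add] at h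
    rcases mul_eq_zero.mp h with hb0 | h0
    · exact hab ⟨ha0, hb0⟩
    · exact hv i0 h0
  set cz : ZMod p := -(a : ZMod p) * (b : ZMod p)⁻¹ with hcz
  set c : ℤ := (cz.val : ℤ) with hcdef
  have hccast : (c : ZMod p) = cz := by
    simp [hcdef, ZMod.natCast_val, ZMod.intCast_cast]
  have hcongr : ∀ i, (v i : ZMod p) = (c : ZMod p) * (u i : ZMod p) := by
    intro i
    have h := hzero i
    push_cast at h
    rw [hccast, hcz]
    field_simp
    linear_combination h
  have hc : (c : ZMod p) ≠ 0 := by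
    intro h0
    exact hv i0 (by rw [hcongr i0, h0, zero_mul])
  have hpc : ¬ (p : ℤ) ∣ c := fun hd =>
    hc ((ZMod.intCast_zmod_eq_zero_iff_dvd c p).mpr hd)
  have hdvd : ∀ i, (p : ℤ) ∣ (v i - c * u i) := by
    intro i
    rw [← ZMod.intCast_zmod_eq_zero_iff_dvd]
    push_cast
    rw [hcongr i]
    ring
  set w : Fin n → ℤ := fun i => (v i - c * u i) / p with hwdef
  have hw : ∀ i, v i = c * u i + p * w i := by
    intro i
    have h := Int.mul_ediv_cancel' (hdvd i)
    simp only [hwdef]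
    linarith
  set T : ℤ := ∑ i, u i * w i with hT
  set W : ℤ := ∑ i, w i * w i with hW
  have hsumv : (∑ i, v i * v i) = c * c * (∑ i, u i * u i) + (p : ℤ) * (2 * c * T) + (p : ℤ) * (p : ℤ) * W := by
    simp only [hT, hW, Finset.mul_sum, ← Finset.sum_add_distrib]
    apply Finset.sum_congr rfl
    intro i _
    rw [hw i]
    ring
  rw [huu, hvv] at hsumv
  have h2cT : 2 * c * T = (p : ℤ) * (1 - c * c - W) := by
    have hmul : (p : ℤ) * (2 * c * T) = (p : ℤ) * ((p : ℤ) * (1 - c * c - W)) := by ring_nf; nlinarith [hsumv]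
    have := mul_left_cancel₀ hp0 hmul
    linarith [this]
  have hpz : Prime (p : ℤ) := Nat.prime_iff_prime_int.mp hp
  have hpT : (p : ℤ) ∣ T := by
    have hdvd2cT : (p : ℤ) ∣ 2 * c * T := ⟨1 - c * c - W, h2cT⟩
    rcases (hpz.dvd_mul).mp hdvd2cT with h1 | h1
    · rcases (hpz.dvd_mul).mp h1 with h2 | h2
      · exfalso
        have : p ∣ 2 := by exact_mod_cast h2
        have hp2 : p = 2 := (Nat.prime_dvd_prime_iff_eq hp Nat.prime_two).mp this
        rw [hp2] at hpodd
        simp [Nat.odd_iff] at hpodd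
      · exact absurd h2 hpc
    · exact h1
  obtain ⟨k, hk⟩ := hpT
  have huv : (∑ i, u i * v i) = (p : ℤ) ^ 2 * (c + k) := by
    have hstep : (∑ i, u i * v i) = c * (∑ i, u i * u i) + (p : ℤ) * T := by
      simp only [hT, Finset.mul_sum, ← Finset.sum_add_distrib]
      apply Finset.sum_congr rfl
      intro i _
      rw [hw i]
      ring
    rw [hstep, huu, hk]
    ring
  set t : ℤ := c + k with htdef
  have hsq : (∑ i, (u i - t * v i) ^ 2) = (p : ℤ) ^ 2 * (1 - t ^ 2) := by
    have hexp : (∑ i, (u i - t * v i) ^ 2)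
        = (∑ i, u i * u i) - 2 * t * (∑ i, u i * v i) + t * t * (∑ i, v i * v i) := by
      simp only [Finset.mul_sum, ← Finset.sum_sub_distrib, ← Finset.sum_add_distrib]
      apply Finset.sum_congr rfl
      intro i _
      ring
    rw [hexp, huu, hvv, huv]
    ring
  have hnonneg : (0 : ℤ) ≤ ∑ i, (u i - t * v i) ^ 2 :=
    Finset.sum_nonneg fun i _ => sq_nonneg _
  have hpsq : (0 : ℤ) < (p : ℤ) ^ 2 := by positivity
  have ht1 : -1 ≤ t := by nlinarith [hsq, hnonneg, hpsq, sq_nonneg (t+1), sq_nonneg (t-1)]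
  have ht2 : t ≤ 1 := by nlinarith [hsq, hnonneg, hpsq, sq_nonneg (t+1), sq_nonneg (t-1)]
  interval_cases t
  · exfalso
    apply hne'
    funext i
    have hz : (∑ i, (u i - (-1) * v i) ^ 2) = 0 := by rw [hsq]; ring
    have := (Finset.sum_eq_zero_iff_of_nonneg (fun i _ => sq_nonneg (u i - (-1) * v i))).mp hz i (Finset.mem_univ i)
    have : u i - (-1) * v i = 0 := by
      have := sq_eq_zero_iff.mp this
      exact this
    simp only [Pi.neg_apply]
    linarith
  · rw [huv]
    ring
  · exfalso
    apply hne
    funext i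
    have hz : (∑ i, (u i - 1 * v i) ^ 2) = 0 := by rw [hsq]; ring
    have := (Finset.sum_eq_zero_iff_of_nonneg (fun i _ => sq_nonneg (u i - 1 * v i))).mp hz i (Finset.mem_univ i)
    have : u i - 1 * v i = 0 := sq_eq_zero_iff.mp this
    linarith
end

section
/- Let p be an odd prime, v an n-dimensional integer vector, and Q an n×n primitive matrix generated from v. Then every n×n primitive matrix Q' generated from v can be obtained from Q by a column permutation, i.e., there is a permutation σ of the column indices with Q' equal to Q with columns permuted by σ. -/
open Matrix BigOperators

lemma aux_int_step (t : ℤ) : 0 ≤ t * (t - 1) := by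
  rcases le_or_gt t 0 with h | h
  · nlinarith
  · exact mul_nonneg (by linarith) (by linarith)

lemma aux_col {n : ℕ} (r : Fin n → ℤ) (h2 : ∑ k, r k * r k = 1)
    (h1 : ∑ k, r k = 1) : ∃ k0, r k0 = 1 ∧ ∀ k, k ≠ k0 → r k = 0 := by
  have hz : ∑ k, (r k * r k - r k) = 0 := by
    rw [Finset.sum_sub_distrib, h2, h1]; ring
  have hid : ∀ k, r k = 0 ∨ r k = 1 := by
    intro k
    have h := (Finset.sum_eq_zero_iff_of_nonneg (fun k _ => by
      have := aux_int_step (r k); nlinarith)).mp hz k (Finset.mem_univ k)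
    have h' : r k * (r k - 1) = 0 := by ring_nf; linarith [h]
    rcases mul_eq_zero.mp h' with h'' | h''
    · exact Or.inl h''
    · exact Or.inr (by linarith)
  have hnonneg : ∀ k, 0 ≤ r k := fun k => by rcases hid k with h | h <;> omega
  have hex : ∃ k0, r k0 = 1 := by
    by_contra h
    push_neg at h
    have : ∀ k ∈ Finset.univ, r k = 0 := fun k _ => by
      rcases hid k with h' | h'
      · exact h'
      · exact absurd h' (h k)
    rw [Finset.sum_eq_zero this] at h1
    exact absurd h1.symm one_ne_zero
  obtain ⟨k0, hk0⟩ := hex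
  refine ⟨k0, hk0, fun k hk => ?_⟩
  have herase := Finset.add_sum_erase Finset.univ r (Finset.mem_univ k0)
  rw [hk0, h1] at herase
  have hz2 : ∑ x ∈ Finset.univ.erase k0, r x = 0 := by linarith
  exact (Finset.sum_eq_zero_iff_of_nonneg (fun i _ => hnonneg i)).mp hz2 k
    (Finset.mem_erase.mpr ⟨hk, Finset.mem_univ k⟩)

lemma aux_expand {n : ℕ} (p : ℤ) (v : Fin n → ℤ) (x y : ℤ) (b b' : Fin n → ℤ) :
    ∑ k, (x * v k + p * b k) * (y * v k + p * b' k)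
      = x * y * (∑ k, v k * v k) + p * (x * ∑ k, v k * b' k)
        + p * (y * ∑ k, v k * b k) + p ^ 2 * ∑ k, b k * b' k := by
  simp only [Finset.mul_sum]
  rw [← Finset.sum_add_distrib, ← Finset.sum_add_distrib, ← Finset.sum_add_distrib]
  exact Finset.sum_congr rfl fun k _ => by ring

theorem stmt7 (n p : ℕ) (hp : p.Prime) (hpodd : Odd p)
    (v : Fin n → ℤ) (Q Q' : Matrix (Fin n) (Fin n) ℚ)
    (hQ : GeneratedFrom p Q v) (hQ' : GeneratedFrom p Q' v) :
    ∃ σ : Equiv.Perm (Fin n), ∀ i j, Q' i j = Q i (σ j) := by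
  haveI : Fact p.Prime := ⟨hp⟩
  have hp2 : p ≠ 2 := by
    rintro rfl
    exact (Nat.not_odd_iff_even.mpr even_two) hpodd
  have hpz : (p : ℤ) ≠ 0 := Int.natCast_ne_zero.mpr hp.ne_zero
  have hpq : (p : ℚ) ≠ 0 := Nat.cast_ne_zero.mpr hp.ne_zero
  have htwo : (2 : ZMod p) ≠ 0 := by
    intro h
    have h2 : ((2 : ℕ) : ZMod p) = 0 := by exact_mod_cast h
    have := (ZMod.natCast_eq_zero_iff 2 p).mp h2
    exact hp2 ((Nat.prime_dvd_prime_iff_eq hp Nat.prime_two).mp this)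
  obtain ⟨⟨hQreg, hQlev, M, hM, hMrank⟩, hQgen⟩ := hQ
  obtain ⟨⟨hQ'reg, hQ'lev, M', hM', hM'rank⟩, hQ'gen⟩ := hQ'
  have hMe : ∀ i j, (M i j : ℚ) = p * Q i j := by
    intro i j
    have := congrFun (congrFun hM i) j
    simpa [Matrix.map_apply, Matrix.smul_apply] using this
  have hM'e : ∀ i j, (M' i j : ℚ) = p * Q' i j := by
    intro i j
    have := congrFun (congrFun hM' i) j
    simpa [Matrix.map_apply, Matrix.smul_apply] using this
  choose c hc using fun j => hQgen M hM j
  choose c' hc' using fun j => hQ'gen M' hM' j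
  -- decompose M = c_j v + p a
  have hdvd : ∀ i j, ∃ t : ℤ, M i j = c j * v i + p * t := by
    intro i j
    have h := hc j i
    have h0 : ((M i j - c j * v i : ℤ) : ZMod p) = 0 := by push_cast; rw [h]; ring
    obtain ⟨t, ht⟩ := (ZMod.intCast_zmod_eq_zero_iff_dvd _ p).mp h0
    exact ⟨t, by linarith⟩
  choose a ha using hdvd
  have hdvd' : ∀ i j, ∃ t : ℤ, M' i j = c' j * v i + p * t := by
    intro i j
    have h := hc' j i
    have h0 : ((M' i j - c' j * v i : ℤ) : ZMod p) = 0 := by push_cast; rw [h]; ring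
    obtain ⟨t, ht⟩ := (ZMod.intCast_zmod_eq_zero_iff_dvd _ p).mp h0
    exact ⟨t, by linarith⟩
  choose a' ha' using hdvd'
  set S : ℤ := ∑ k, v k * v k with hSdef
  set A : Fin n → ℤ := fun j => ∑ k, v k * a k j with hAdef
  set A' : Fin n → ℤ := fun j => ∑ k, v k * a' k j with hA'def
  -- orthogonality over ℚ, entrywise
  have horthQ : ∀ i j, (∑ k, Q k i * Q k j) = if i = j then (1:ℚ) else 0 := by
    intro i j
    have := congrFun (congrFun hQreg.1 i) j
    simpa [Matrix.mul_apply, Matrix.transpose_apply, Matrix.one_apply] using this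
  have horthQ' : ∀ i j, (∑ k, Q' k i * Q' k j) = if i = j then (1:ℚ) else 0 := by
    intro i j
    have := congrFun (congrFun hQ'reg.1 i) j
    simpa [Matrix.mul_apply, Matrix.transpose_apply, Matrix.one_apply] using this
  -- MᵀM = p² I entrywise over ℤ
  have hMtM : ∀ i j, ∑ k, M k i * M k j = (p:ℤ)^2 * (if i = j then 1 else 0) := by
    intro i j
    have h1 : ((∑ k, M k i * M k j : ℤ) : ℚ)
        = (((p:ℤ)^2 * (if i = j then 1 else 0) : ℤ) : ℚ) := by
      push_cast
      calc (∑ k, (M k i : ℚ) * (M k j : ℚ))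
          = ∑ k, (p:ℚ)^2 * (Q k i * Q k j) := by
            refine Finset.sum_congr rfl fun k _ => ?_
            rw [hMe, hMe]; ring
        _ = (p:ℚ)^2 * ∑ k, Q k i * Q k j := by rw [Finset.mul_sum]
        _ = (p:ℚ)^2 * (if i = j then (1:ℚ) else 0) := by rw [horthQ]
        _ = _ := by split <;> simp
    exact_mod_cast h1
  have hM'tM' : ∀ i j, ∑ k, M' k i * M' k j = (p:ℤ)^2 * (if i = j then 1 else 0) := by
    intro i j
    have h1 : ((∑ k, M' k i * M' k j : ℤ) : ℚ)
        = (((p:ℤ)^2 * (if i = j then 1 else 0) : ℤ) : ℚ) := by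
      push_cast
      calc (∑ k, (M' k i : ℚ) * (M' k j : ℚ))
          = ∑ k, (p:ℚ)^2 * (Q' k i * Q' k j) := by
            refine Finset.sum_congr rfl fun k _ => ?_
            rw [hM'e, hM'e]; ring
        _ = (p:ℚ)^2 * ∑ k, Q' k i * Q' k j := by rw [Finset.mul_sum]
        _ = (p:ℚ)^2 * (if i = j then (1:ℚ) else 0) := by rw [horthQ']
        _ = _ := by split <;> simp
    exact_mod_cast h1
  -- expansions
  have hexp : ∀ i j, ∑ k, M k i * M k j
      = c i * c j * S + p * (c i * A j) + p * (c j * A i)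
        + (p:ℤ)^2 * ∑ k, a k i * a k j := by
    intro i j
    calc ∑ k, M k i * M k j
        = ∑ k, (c i * v k + p * a k i) * (c j * v k + p * a k j) :=
          Finset.sum_congr rfl fun k _ => by rw [ha k i, ha k j]
      _ = _ := aux_expand p v (c i) (c j) (fun k => a k i) (fun k => a k j)
  have hexp' : ∀ i j, ∑ k, M' k i * M' k j
      = c' i * c' j * S + p * (c' i * A' j) + p * (c' j * A' i)
        + (p:ℤ)^2 * ∑ k, a' k i * a' k j := by
    intro i j
    calc ∑ k, M' k i * M' k j
        = ∑ k, (c' i * v k + p * a' k i) * (c' j * v k + p * a' k j) :=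
          Finset.sum_congr rfl fun k _ => by rw [ha' k i, ha' k j]
      _ = _ := aux_expand p v (c' i) (c' j) (fun k => a' k i) (fun k => a' k j)
  have hexpX : ∀ i j, ∑ k, M k i * M' k j
      = c i * c' j * S + p * (c i * A' j) + p * (c' j * A i)
        + (p:ℤ)^2 * ∑ k, a k i * a' k j := by
    intro i j
    calc ∑ k, M k i * M' k j
        = ∑ k, (c i * v k + p * a k i) * (c' j * v k + p * a' k j) :=
          Finset.sum_congr rfl fun k _ => by rw [ha k i, ha' k j]
      _ = _ := aux_expand p v (c i) (c' j) (fun k => a k i) (fun k => a' k j)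
  -- existence of a column with c ≠ 0 mod p
  have hex0 : ∃ j0, (c j0 : ZMod p) ≠ 0 := by
    by_contra h
    push_neg at h
    have hzero : M.map (Int.cast : ℤ → ZMod p) = 0 := by
      ext i j
      simp only [Matrix.map_apply, Matrix.zero_apply]
      rw [hc j i, h j, zero_mul]
    rw [hzero, Matrix.rank_zero] at hMrank
    exact zero_ne_one hMrank
  obtain ⟨j0, hj0⟩ := hex0
  have hex0' : ∃ j0', (c' j0' : ZMod p) ≠ 0 := by
    by_contra h
    push_neg at h
    have hzero : M'.map (Int.cast : ℤ → ZMod p) = 0 := by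
      ext i j
      simp only [Matrix.map_apply, Matrix.zero_apply]
      rw [hc' j i, h j, zero_mul]
    rw [hzero, Matrix.rank_zero] at hM'rank
    exact zero_ne_one hM'rank
  obtain ⟨j0', hj0'⟩ := hex0'
  -- p ∣ S
  have hSd : (p:ℤ) ∣ S := by
    have e1 := hMtM j0 j0
    rw [hexp j0 j0] at e1
    have e2 := congrArg (Int.cast : ℤ → ZMod p) e1
    push_cast at e2
    rw [ZMod.natCast_self] at e2
    simp only [zero_mul, mul_zero, zero_pow, add_zero, zero_add] at e2
    -- e2 : c j0 * c j0 * S = 0  (in ZMod p) roughly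
    rw [← ZMod.intCast_zmod_eq_zero_iff_dvd]
    have hcc : (c j0 : ZMod p) * (c j0 : ZMod p) ≠ 0 := mul_ne_zero hj0 hj0
    have : ((c j0 : ZMod p) * (c j0 : ZMod p)) * (S : ZMod p) = 0 := by
      linear_combination e2
    rcases mul_eq_zero.mp this with h | h
    · exact absurd h hcc
    · exact h
  obtain ⟨s, hs⟩ := hSd
  -- divided identity: p δ = c i c j s + c i A j + c j A i + p * B
  have hdiv : ∀ i j, (p:ℤ) * (if i = j then 1 else 0)
      = c i * c j * s + c i * A j + c j * A i + p * ∑ k, a k i * a k j := by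
    intro i j
    have e1 := hMtM i j
    have e2 := hexp i j
    rw [hs] at e2
    have h0 : (p:ℤ) * ((p:ℤ) * (if i = j then 1 else 0))
        = (p:ℤ) * (c i * c j * s + c i * A j + c j * A i + p * ∑ k, a k i * a k j) := by
      linear_combination e2 - e1
    exact mul_left_cancel₀ hpz h0
  have hdiv' : ∀ i j, (p:ℤ) * (if i = j then 1 else 0)
      = c' i * c' j * s + c' i * A' j + c' j * A' i + p * ∑ k, a' k i * a' k j := by
    intro i j
    have e1 := hM'tM' i j
    have e2 := hexp' i j
    rw [hs] at e2
    have h0 : (p:ℤ) * ((p:ℤ) * (if i = j then 1 else 0))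
        = (p:ℤ) * (c' i * c' j * s + c' i * A' j + c' j * A' i + p * ∑ k, a' k i * a' k j) := by
      linear_combination e2 - e1
    exact mul_left_cancel₀ hpz h0
  -- mod p consequences
  have hstar : ∀ i j, (c i : ZMod p) * (c j : ZMod p) * (s : ZMod p)
      + (c i : ZMod p) * (A j : ZMod p) + (c j : ZMod p) * (A i : ZMod p) = 0 := by
    intro i j
    have e := congrArg (Int.cast : ℤ → ZMod p) (hdiv i j)
    push_cast at e
    rw [ZMod.natCast_self] at e
    linear_combination -e
  have hstar' : ∀ i j, (c' i : ZMod p) * (c' j : ZMod p) * (s : ZMod p)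
      + (c' i : ZMod p) * (A' j : ZMod p) + (c' j : ZMod p) * (A' i : ZMod p) = 0 := by
    intro i j
    have e := congrArg (Int.cast : ℤ → ZMod p) (hdiv' i j)
    push_cast at e
    rw [ZMod.natCast_self] at e
    linear_combination -e
  -- 2 A_i = - c_i s  (mod p)
  have hA2 : ∀ i, 2 * (A i : ZMod p) = -((c i : ZMod p) * (s : ZMod p)) := by
    intro i
    have e1 := hstar j0 j0
    have e2 := hstar i j0
    have h0 : (c j0 : ZMod p) * (c j0 : ZMod p)
        * (2 * (A i : ZMod p) + (c i : ZMod p) * (s : ZMod p)) = 0 := by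
      linear_combination (2 * (c j0 : ZMod p)) * e2 - (c i : ZMod p) * e1
    rcases mul_eq_zero.mp h0 with h | h
    · exact absurd h (mul_ne_zero hj0 hj0)
    · linear_combination h
  have hA2' : ∀ i, 2 * (A' i : ZMod p) = -((c' i : ZMod p) * (s : ZMod p)) := by
    intro i
    have e1 := hstar' j0' j0'
    have e2 := hstar' i j0'
    have h0 : (c' j0' : ZMod p) * (c' j0' : ZMod p)
        * (2 * (A' i : ZMod p) + (c' i : ZMod p) * (s : ZMod p)) = 0 := by
      linear_combination (2 * (c' j0' : ZMod p)) * e2 - (c' i : ZMod p) * e1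
    rcases mul_eq_zero.mp h0 with h | h
    · exact absurd h (mul_ne_zero hj0' hj0')
    · linear_combination h
  -- p² divides the cross Gram matrix entries
  have hNdvd : ∀ i j, ∃ r : ℤ, ∑ k, M k i * M' k j = (p:ℤ)^2 * r := by
    intro i j
    have e := hexpX i j
    rw [hs] at e
    set T : ℤ := c i * c' j * s + c i * A' j + c' j * A i with hT
    have hTmod : ((T : ℤ) : ZMod p) = 0 := by
      have h2T : (2 : ZMod p) * ((T : ℤ) : ZMod p) = 0 := by
        rw [hT]
        push_cast
        linear_combination (c i : ZMod p) * hA2' j + (c' j : ZMod p) * hA2 i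
      rcases mul_eq_zero.mp h2T with h | h
      · exact absurd h htwo
      · exact h
    obtain ⟨t, ht⟩ := (ZMod.intCast_zmod_eq_zero_iff_dvd _ p).mp hTmod
    refine ⟨t + ∑ k, a k i * a' k j, ?_⟩
    rw [e]
    linear_combination (p:ℤ) * ht
  choose R hR using fun i j => hNdvd i j
  -- R is (entrywise) Qᵀ Q'
  have hRQ : ∀ i j, ((R i j : ℤ) : ℚ) = ∑ k, Q k i * Q' k j := by
    intro i j
    have e := congrArg (Int.cast : ℤ → ℚ) (hR i j)
    push_cast at e
    have e2 : (p:ℚ)^2 * (∑ k, Q k i * Q' k j) = (p:ℚ)^2 * ((R i j : ℤ) : ℚ) := by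
      rw [Finset.mul_sum, ← e]
      exact Finset.sum_congr rfl fun k _ => by rw [hMe, hM'e]; ring
    exact (mul_left_cancel₀ (pow_ne_zero 2 hpq) e2).symm
  have hRQ2 : ∀ k i, ((R k i : ℤ) : ℚ) = (Qᵀ * Q') k i := by
    intro k i
    rw [hRQ, Matrix.mul_apply]
    exact Finset.sum_congr rfl fun t _ => by rw [Matrix.transpose_apply]
  have hQQt : Q * Qᵀ = 1 := mul_eq_one_comm.mp hQreg.1
  have hmat : (Qᵀ * Q')ᵀ * (Qᵀ * Q') = 1 := by
    rw [Matrix.transpose_mul, Matrix.transpose_transpose, Matrix.mul_assoc,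
      ← Matrix.mul_assoc Q Qᵀ Q', hQQt, Matrix.one_mul, hQ'reg.1]
  have hRorth : ∀ i j, ∑ k, R k i * R k j = if i = j then (1:ℤ) else 0 := by
    intro i j
    have hq : ∑ k, (Qᵀ * Q') k i * (Qᵀ * Q') k j = if i = j then (1:ℚ) else 0 := by
      have := congrFun (congrFun hmat i) j
      simpa [Matrix.mul_apply, Matrix.transpose_apply, Matrix.one_apply, mul_comm] using this
    have h1 : ((∑ k, R k i * R k j : ℤ) : ℚ) = ((if i = j then (1:ℤ) else 0 : ℤ) : ℚ) := by
      push_cast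
      calc (∑ k, ((R k i : ℤ):ℚ) * ((R k j : ℤ):ℚ))
          = ∑ k, (Qᵀ * Q') k i * (Qᵀ * Q') k j :=
            Finset.sum_congr rfl fun k _ => by rw [hRQ2, hRQ2]
        _ = if i = j then (1:ℚ) else 0 := hq
        _ = _ := by split <;> simp
    exact_mod_cast h1
  -- column sums of R are 1
  have hQrow : ∀ t, ∑ k, Q t k = 1 := by
    intro t
    have := congrFun hQreg.2 t
    simpa [Matrix.mulVec, dotProduct] using this
  have hQ'col : ∀ j, ∑ t, Q' t j = 1 := by
    intro j
    have h1 : Q'ᵀ *ᵥ (fun _ => (1:ℚ)) = fun _ => 1 := by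
      conv_lhs => rw [← hQ'reg.2]
      rw [Matrix.mulVec_mulVec, hQ'reg.1, Matrix.one_mulVec]
    have := congrFun h1 j
    simpa [Matrix.mulVec, dotProduct, Matrix.transpose_apply] using this
  have hRsum : ∀ j, ∑ k, R k j = 1 := by
    intro j
    have h1 : ((∑ k, R k j : ℤ) : ℚ) = ((1 : ℤ) : ℚ) := by
      push_cast
      calc (∑ k, ((R k j : ℤ):ℚ))
          = ∑ k, ∑ t, Q t k * Q' t j := Finset.sum_congr rfl fun k _ => by rw [hRQ]
        _ = ∑ t, ∑ k, Q t k * Q' t j := Finset.sum_comm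
        _ = ∑ t, Q' t j * ∑ k, Q t k := by
            refine Finset.sum_congr rfl fun t _ => ?_
            rw [Finset.mul_sum]
            exact Finset.sum_congr rfl fun k _ => by ring
        _ = ∑ t, Q' t j := by
            refine Finset.sum_congr rfl fun t _ => ?_
            rw [hQrow t, mul_one]
        _ = 1 := hQ'col j
    exact_mod_cast h1
  -- each column of R is a standard basis vector
  have hcolstr : ∀ j, ∃ k0, R k0 j = 1 ∧ ∀ k, k ≠ k0 → R k j = 0 := by
    intro j
    have h2 := hRorth j j
    rw [if_pos rfl] at h2
    exact aux_col (fun k => R k j) h2 (hRsum j)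
  choose σf hσ1 hσ0 using hcolstr
  have hinj : Function.Injective σf := by
    intro j1 j2 h
    by_contra hne
    have horth := hRorth j1 j2
    rw [if_neg hne] at horth
    have hone : ∑ k, R k j1 * R k j2 = 1 := by
      rw [Finset.sum_eq_single (σf j1)
        (fun b _ hb => by rw [hσ0 j1 b hb, zero_mul])
        (fun hmem => absurd (Finset.mem_univ _) hmem)]
      rw [hσ1 j1, h, hσ1 j2, one_mul]
    rw [horth] at hone
    exact one_ne_zero hone.symm
  refine ⟨Equiv.ofBijective σf (Finite.injective_iff_bijective.mp hinj), fun i j => ?_⟩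
  have hmm : Q * (Qᵀ * Q') = Q' := by
    rw [← Matrix.mul_assoc, hQQt, Matrix.one_mul]
  have hentry : Q' i j = ∑ k, Q i k * ((R k j : ℤ) : ℚ) := by
    conv_lhs => rw [← hmm]
    rw [Matrix.mul_apply]
    exact Finset.sum_congr rfl fun k _ => by rw [hRQ2]
  have hsum : ∑ k, Q i k * ((R k j : ℤ) : ℚ) = Q i (σf j) * ((R (σf j) j : ℤ) : ℚ) :=
    Finset.sum_eq_single (σf j)
      (fun b _ hb => by rw [hσ0 j b hb]; norm_num)
      (fun hmem => absurd (Finset.mem_univ _) hmem)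
  rw [hentry, hsum, hσ1 j]
  norm_num
end

section
/- Let p be an odd prime and v an n-dimensional integer vector each of whose entries is nonzero modulo p. If Q is a primitive matrix generated from v, then no entry of Q is an integer; in particular every entry of Q is nonzero. -/
open Matrix BigOperators

theorem stmt8 (n p : ℕ) (hp : p.Prime) (hpodd : Odd p)
    (v : Fin n → ℤ) (hv : ∀ i, ((v i : ℤ) : ZMod p) ≠ 0)
    (Q : Matrix (Fin n) (Fin n) ℚ) (hQ : GeneratedFrom p Q v) :
    ∀ i j, (∀ m : ℤ, Q i j ≠ (m : ℚ)) ∧ Q i j ≠ 0 := by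
  haveI : Fact p.Prime := ⟨hp⟩
  obtain ⟨⟨⟨horth, he⟩, hlevel, M0, hM0, hrank⟩, hgen⟩ := hQ
  have hpQ : (p : ℚ) ≠ 0 := by exact_mod_cast hp.ne_zero
  intro i j
  have key : ∀ m : ℤ, Q i j ≠ (m : ℚ) := by
    intro m hm
    -- entries of p • Q
    have hM0app : ∀ a b, (M0 a b : ℚ) = (p : ℚ) * Q a b := by
      intro a b
      have := congrFun (congrFun hM0 a) b
      simpa [Matrix.map_apply, Matrix.smul_apply] using this
    -- the coefficient c of column j is 0 mod p
    obtain ⟨c, hc⟩ := hgen M0 hM0 j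
    have hMij : M0 i j = (p : ℤ) * m := by
      have := hM0app i j
      rw [hm] at this
      exact_mod_cast this
    have hc0 : (c : ZMod p) = 0 := by
      have h1 := hc i
      rw [hMij] at h1
      have h2 : (((p : ℤ) * m : ℤ) : ZMod p) = 0 := by
        push_cast
        simp [ZMod.natCast_self]
      rw [h2] at h1
      rcases mul_eq_zero.mp h1.symm with h | h
      · exact h
      · exact absurd h (hv i)
    -- whole column j of M0 is 0 mod p
    have hcol : ∀ a, (p : ℤ) ∣ M0 a j := by
      intro a
      have := hc a
      rw [hc0, zero_mul] at this
      exact (ZMod.intCast_zmod_eq_zero_iff_dvd _ _).mp this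
    choose u hu using hcol
    have hQu : ∀ a, Q a j = (u a : ℚ) := by
      intro a
      have h1 := hM0app a j
      rw [hu a] at h1
      push_cast at h1
      exact (mul_left_cancel₀ hpQ h1).symm
    -- column sums of Q are 1 :  Qᵀ e = e
    have hte : (Qᵀ *ᵥ fun _ => (1 : ℚ)) = fun _ => 1 := by
      calc Qᵀ *ᵥ (fun _ => (1 : ℚ)) = Qᵀ *ᵥ (Q *ᵥ fun _ => (1 : ℚ)) := by rw [he]
        _ = (Qᵀ * Q) *ᵥ fun _ => (1 : ℚ) := by rw [Matrix.mulVec_mulVec]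
        _ = fun _ => 1 := by rw [horth]; simp
    have hcolsum : ∑ a, Q a j = 1 := by
      have := congrFun hte j
      simpa [Matrix.mulVec, dotProduct, Matrix.transpose_apply] using this
    have hcolnorm : ∑ a, Q a j * Q a j = 1 := by
      have := congrFun (congrFun horth j) j
      simpa [Matrix.mul_apply, Matrix.transpose_apply, Matrix.one_apply,
        mul_comm] using this
    -- some u k ≠ 0
    have husum : ∑ a, (u a : ℚ) = 1 := by
      rw [← hcolsum]; exact Finset.sum_congr rfl fun a _ => (hQu a).symm
    have hex : ∃ k, u k ≠ 0 := by
      by_contra h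
      push_neg at h
      simp [h] at husum
    obtain ⟨k, hk⟩ := hex
    -- Q k j ^ 2 = 1
    have hsq_le : Q k j * Q k j ≤ 1 := by
      rw [← hcolnorm]
      exact Finset.single_le_sum (fun a _ => mul_self_nonneg (Q a j))
        (Finset.mem_univ k)
    have hsq_ge : (1 : ℚ) ≤ Q k j * Q k j := by
      rw [hQu k]
      have : (1 : ℤ) ≤ u k * u k := by
        rcases lt_or_gt_of_ne hk with h | h <;> nlinarith
      exact_mod_cast this
    have hsq : Q k j * Q k j = 1 := le_antisymm hsq_le hsq_ge
    -- row k of Q is zero off column j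
    have hQQt : Q * Qᵀ = 1 := mul_eq_one_comm.mp horth
    have hrownorm : ∑ b, Q k b * Q k b = 1 := by
      have := congrFun (congrFun hQQt k) k
      simpa [Matrix.mul_apply, Matrix.transpose_apply, Matrix.one_apply] using this
    have hrow0 : ∀ b, b ≠ j → Q k b = 0 := by
      intro b hb
      have hsplit : ∑ a ∈ Finset.univ.erase j, Q k a * Q k a = 0 := by
        have := Finset.add_sum_erase Finset.univ (fun a => Q k a * Q k a)
          (Finset.mem_univ j)
        rw [hrownorm] at this
        linarith [hsq]
      have := (Finset.sum_eq_zero_iff_of_nonneg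
        (fun a _ => mul_self_nonneg (Q k a))).mp hsplit b
        (Finset.mem_erase.mpr ⟨hb, Finset.mem_univ b⟩)
      exact mul_self_eq_zero.mp this
    -- row k of M0 is 0 mod p
    have hrowM : ∀ b, ((M0 k b : ℤ) : ZMod p) = 0 := by
      intro b
      by_cases hb : b = j
      · subst hb
        rw [hu k]
        push_cast
        simp [ZMod.natCast_self]
      · have h1 := hM0app k b
        rw [hrow0 b hb, mul_zero] at h1
        have : M0 k b = 0 := by exact_mod_cast h1
        simp [this]
    -- hence every column of M0 is 0 mod p
    have hall : ∀ a b, ((M0 a b : ℤ) : ZMod p) = 0 := by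
      intro a b
      obtain ⟨c', hc'⟩ := hgen M0 hM0 b
      have hc'0 : (c' : ZMod p) = 0 := by
        have h1 := hc' k
        rw [hrowM b] at h1
        rcases mul_eq_zero.mp h1.symm with h | h
        · exact h
        · exact absurd h (hv k)
      have := hc' a
      rw [hc'0, zero_mul] at this
      exact this
    have hmap0 : M0.map (Int.cast : ℤ → ZMod p) = 0 := by
      ext a b
      simpa [Matrix.map_apply] using hall a b
    rw [hmap0, Matrix.rank_zero] at hrank
    exact one_ne_zero hrank.symm
  refine ⟨key, ?_⟩
  intro h0
  exact key 0 (by simpa using h0)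
end

section
/- Let A be an n×n adjacency matrix (a symmetric 0-1 integer matrix with zero diagonal) and let B be an n×n symmetric integer matrix. If A and B are generalized cospectral, then B is also an adjacency matrix: every entry of B is 0 or 1 and every diagonal entry of B is 0. -/
/-!
Generalized cospectrality gives equal traces of `A` and `B`, of `A²` and `B²`, and of the squares
of the complements `J - I - A` and `J - I - B` (real symmetric matrices with the same
characteristic polynomial have the same eigenvalues, and `tr (M²)` is the sum of their squares).
Expanding the last pair shows that `A` and `B` have the same entry sum. For a symmetric integer
matrix `tr (M²) = ∑ Mᵢⱼ²`, hence `∑ (Bᵢⱼ² - Bᵢⱼ) = tr (A²) - ∑ Aᵢⱼ = 0`; as `x ≤ x²` on `ℤ`,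
every `Bᵢⱼ` is `0` or `1`. Finally `tr B = tr A = 0` with nonnegative diagonal forces `Bᵢᵢ = 0`.
-/

open Matrix BigOperators

lemma Int.forall_eq_zero_or_one_iff_sum_sq_eq_sum {ι : Type*} [Fintype ι] (f : ι → ℤ) :
    (∀ i, f i = 0 ∨ f i = 1) ↔ ∑ i, f i ^ 2 = ∑ i, f i := by
  have hnonneg : ∀ i ∈ Finset.univ, 0 ≤ f i ^ 2 - f i :=
    fun i _ => sub_nonneg.2 (Int.le_self_sq _)
  rw [← sub_eq_zero, ← Finset.sum_sub_distrib, Finset.sum_eq_zero_iff_of_nonneg hnonneg]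
  refine forall_congr' fun i => ?_
  rw [sq, ← mul_sub_one, mul_eq_zero, sub_eq_zero]
  simp

namespace Matrix

section Hermitian

variable {𝕜 : Type*} [RCLike 𝕜] {m : Type*} [Fintype m] [DecidableEq m]
  {A B : Matrix m m 𝕜}

lemma IsHermitian.trace_mul_self_eq_sum_eigenvalues_sq (hA : A.IsHermitian) :
    (A * A).trace = ∑ i, (hA.eigenvalues i : 𝕜) ^ 2 := by
  conv_lhs => rw [hA.spectral_theorem, ← map_mul, Unitary.conjStarAlgAut_apply]
  rw [trace_mul_cycle, Unitary.coe_star_mul_self, one_mul, diagonal_mul_diagonal, trace_diagonal]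
  simp [sq]

lemma IsHermitian.trace_mul_self_eq_of_charpoly_eq (hA : A.IsHermitian) (hB : B.IsHermitian)
    (h : A.charpoly = B.charpoly) : (A * A).trace = (B * B).trace := by
  rw [hA.trace_mul_self_eq_sum_eigenvalues_sq, hB.trace_mul_self_eq_sum_eigenvalues_sq,
    (hA.eigenvalues_eq_eigenvalues_iff hB).2 h]

end Hermitian

variable {m : Type*} [Fintype m]

lemma IsSymm.trace_mul_self_eq_of_charpoly_eq [DecidableEq m] {M N : Matrix m m ℤ}
    (hM : M.IsSymm) (hN : N.IsSymm) (h : M.charpoly = N.charpoly) :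
    (M * M).trace = (N * N).trace := by
  let f := Int.castRingHom ℝ
  have hf : ∀ P : Matrix m m ℤ, ((P * P).map f).trace = ((P * P).trace : ℝ) :=
    fun P => (AddMonoidHom.map_trace f.toAddMonoidHom (P * P)).symm
  have key := (isHermitian_iff_isSymm.2 (hM.map f)).trace_mul_self_eq_of_charpoly_eq
    (isHermitian_iff_isSymm.2 (hN.map f)) (by rw [charpoly_map, charpoly_map, h])
  rw [← Matrix.map_mul, ← Matrix.map_mul, hf, hf] at key
  exact_mod_cast key

lemma trace_sub_mul_sub_self {R : Type*} [CommRing R] (K M : Matrix m m R) :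
    ((K - M) * (K - M)).trace = (K * K).trace - 2 * (K * M).trace + (M * M).trace := by
  simp only [sub_mul, mul_sub, trace_sub, trace_mul_comm M K]
  ring

lemma IsSymm.trace_mul_self {R : Type*} [CommSemiring R] {M : Matrix m m R} (hM : M.IsSymm) :
    (M * M).trace = ∑ i, ∑ j, M i j ^ 2 := by
  simp only [trace, diag, mul_apply, sq, hM.apply]

lemma forall_eq_zero_or_one_iff_sum_sq_eq_sum (M : Matrix m m ℤ) :
    (∀ i j, M i j = 0 ∨ M i j = 1) ↔ ∑ i, ∑ j, M i j ^ 2 = ∑ i, ∑ j, M i j := by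
  simpa only [Fintype.sum_prod_type, Prod.forall] using
    Int.forall_eq_zero_or_one_iff_sum_sq_eq_sum fun p : m × m => M p.1 p.2

end Matrix

lemma trace_allOnes_mul {n : ℕ} (M : Matrix (Fin n) (Fin n) ℤ) :
    (allOnes n * M).trace = ∑ i, ∑ j, M i j := by
  simp only [trace, diag, mul_apply, allOnes, of_apply, one_mul]
  exact Finset.sum_comm

lemma trace_mul_self_allOnes_sub_one_sub {n : ℕ} (M : Matrix (Fin n) (Fin n) ℤ) :
    ((allOnes n - 1 - M) * (allOnes n - 1 - M)).trace =
      ((allOnes n - 1) * (allOnes n - 1)).trace - 2 * ∑ i, ∑ j, M i j + 2 * M.trace +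
        (M * M).trace := by
  rw [trace_sub_mul_sub_self, Matrix.sub_mul (allOnes n) 1 M, one_mul, trace_sub,
    trace_allOnes_mul]
  ring

lemma Matrix.IsSymm.allOnes_sub_one_sub {n : ℕ} {M : Matrix (Fin n) (Fin n) ℤ} (hM : M.IsSymm) :
    (allOnes n - 1 - M).IsSymm :=
  ((IsSymm.ext fun _ _ => rfl).sub isSymm_one).sub hM

lemma GenCospectral.trace_eq {n : ℕ} {A B : Matrix (Fin n) (Fin n) ℤ} (h : GenCospectral A B) :
    A.trace = B.trace := by
  rw [trace_eq_neg_charpoly_nextCoeff, trace_eq_neg_charpoly_nextCoeff, h.1]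

lemma GenCospectral.sum_entries_eq {n : ℕ} {A B : Matrix (Fin n) (Fin n) ℤ} (hA : A.IsSymm)
    (hB : B.IsSymm) (h : GenCospectral A B) : ∑ i, ∑ j, A i j = ∑ i, ∑ j, B i j := by
  have hsq := hA.trace_mul_self_eq_of_charpoly_eq hB h.1
  have hsq_compl := hA.allOnes_sub_one_sub.trace_mul_self_eq_of_charpoly_eq
    hB.allOnes_sub_one_sub h.2
  rw [trace_mul_self_allOnes_sub_one_sub, trace_mul_self_allOnes_sub_one_sub, h.trace_eq,
    hsq] at hsq_compl
  linarith

theorem stmt9 (n : ℕ) (A B : Matrix (Fin n) (Fin n) ℤ)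
    (hA : IsAdjacencyMat A) (hB : B.IsSymm) (h : GenCospectral A B) :
    IsAdjacencyMat B := by
  obtain ⟨hA_symm, hA_01, hA_diag⟩ := hA
  have hB_01 : ∀ i j, B i j = 0 ∨ B i j = 1 := by
    rw [B.forall_eq_zero_or_one_iff_sum_sq_eq_sum, ← hB.trace_mul_self,
      ← hA_symm.trace_mul_self_eq_of_charpoly_eq hB h.1, hA_symm.trace_mul_self,
      A.forall_eq_zero_or_one_iff_sum_sq_eq_sum.1 hA_01, h.sum_entries_eq hA_symm hB]
  have htrace : B.trace = 0 := by
    rw [← h.trace_eq]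
    exact Finset.sum_eq_zero fun i _ => hA_diag i
  have hB_diag_nonneg : ∀ i ∈ Finset.univ, 0 ≤ B i i := fun i _ => by
    rcases hB_01 i i with hi | hi <;> simp [hi]
  exact ⟨hB, hB_01, fun i => (Finset.sum_eq_zero_iff_of_nonneg hB_diag_nonneg).1 htrace i
    (Finset.mem_univ i)⟩
end

section
/- Let G be a controllable n-vertex graph with adjacency matrix A and walk matrix W, and let p be an odd prime such that p² divides det W and W has rank n−1 over ℤ/pℤ. Let v be an integer vector with Wᵀ v ≡ 0 (mod p) entrywise and v ≢ 0 (mod p). If Q is a primitive matrix generated from v, then every entry of the rational matrix Qᵀ A Q is an integer. -/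
open Matrix BigOperators

/-!
Write `W` for the walk matrix and `M = pQ`, an integer matrix with `MᵀM = p²I`.
Since `W` has rank `n - 1` modulo `p`, its adjugate is nonzero modulo `p`; a row `u` of
`adj W` satisfies `Wᵀu = det W • eₖ ≡ 0 (mod p²)` and spans the kernel of `Wᵀ` modulo `p`.
Hence every column of `M`, being congruent to a multiple of `v`, has the form `tu + py`.
By Cayley–Hamilton and the symmetry of `A`, also `Wᵀ(Au) ≡ 0 (mod p²)`, so `Au = cu + pz`
with `Wᵀz ≡ 0 (mod p)`, i.e. `z ≡ μu (mod p)`. A column of `M` that is nonzero modulo `p`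
has squared length `p²`, which forces `uᵀu ≡ 0`, hence `uᵀz ≡ 0 (mod p)`. Expanding the entries of
`Mᵀ(A - c)M` in the columns `tu + py` now shows `MᵀAM ≡ c MᵀM ≡ 0 (mod p²)`, so
`QᵀAQ = MᵀAM / p²` is integral.
-/

namespace Matrix

variable {m n o : Type*} [Fintype n]

section Field

variable {K : Type*} [Field K]

theorem exists_eq_smul_of_mulVec_eq_zero [Fintype m] (C : Matrix m n K)
    (hC : C.rank = Fintype.card n - 1) {u x : n → K} (hu : C *ᵥ u = 0) (hu0 : u ≠ 0)
    (hx : C *ᵥ x = 0) : ∃ a : K, x = a • u := by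
  have hker : Submodule.span K {u} = LinearMap.ker C.mulVecLin := by
    refine Submodule.eq_of_le_of_finrank_le ((Submodule.span_singleton_le_iff_mem _ _).2 hu) ?_
    have := C.mulVecLin.finrank_range_add_finrank_ker
    rw [Module.finrank_fintype_fun_eq_card, ← Matrix.rank] at this
    rw [finrank_span_singleton hu0]
    omega
  obtain ⟨a, ha⟩ := Submodule.mem_span_singleton.1 (hker ▸ hx : x ∈ Submodule.span K {u})
  exact ⟨a, ha.symm⟩

theorem updateCol_mulVec [Fintype m] [DecidableEq n] (B : Matrix m n K) (k : n) (b : m → K)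
    (x : n → K) : B.updateCol k b *ᵥ x = B *ᵥ Function.update x k 0 + x k • b := by
  ext i
  simp only [mulVec, dotProduct, Pi.add_apply, Pi.smul_apply, smul_eq_mul]
  rw [Fintype.sum_eq_add_sum_compl k, Fintype.sum_eq_add_sum_compl k]
  simp only [updateCol_self, Function.update_self, mul_zero, zero_add]
  rw [add_comm, mul_comm]
  congr 1
  refine Finset.sum_congr rfl fun j hj => ?_
  have hjk : j ≠ k := by simpa using hj
  rw [updateCol_ne hjk, Function.update_of_ne hjk]

theorem adjugate_ne_zero_of_rank_eq [DecidableEq n] [Nonempty n] (B : Matrix n n K)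
    (hB : B.rank = Fintype.card n - 1) : B.adjugate ≠ 0 := by
  intro hadj
  have hlt : B.rank < Fintype.card n := by have := Fintype.card_pos (α := n); omega
  obtain ⟨b, hb⟩ : ∃ b, b ∉ LinearMap.range B.mulVecLin := by
    by_contra! h
    have htop : LinearMap.range B.mulVecLin = ⊤ := eq_top_iff.2 fun b _ => h b
    rw [Matrix.rank, htop, finrank_top, Module.finrank_fintype_fun_eq_card] at hlt
    exact lt_irrefl _ hlt
  obtain ⟨u, hu0, hu⟩ := exists_mulVec_eq_zero_iff.2 (not_not.1 (mt rank_of_det_ne_zero hlt.ne))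
  obtain ⟨k, hk⟩ := Function.ne_iff.1 hu0
  have hdet : (B.updateCol k b).det = 0 := by
    rw [← cramer_apply, cramer_eq_adjugate_mulVec, hadj, zero_mulVec, Pi.zero_apply]
  -- a kernel vector `x` of `B.updateCol k b` cannot lie in `ker B = K ∙ u` (as `u k ≠ 0`),
  -- so `x k ≠ 0`, and then `x` exhibits `b` in the range of `B`
  obtain ⟨x, hx0, hx⟩ := exists_mulVec_eq_zero_iff.2 hdet
  rw [updateCol_mulVec] at hx
  by_cases hxk : x k = 0
  · rw [hxk, zero_smul, add_zero, Function.update_eq_self_iff.2 hxk.symm] at hx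
    obtain ⟨a, rfl⟩ := exists_eq_smul_of_mulVec_eq_zero B hB hu hu0 hx
    have ha : a = 0 := (mul_eq_zero.1 hxk).resolve_right hk
    exact hx0 (by rw [ha, zero_smul])
  · refine hb ⟨-(x k)⁻¹ • Function.update x k 0, ?_⟩
    rw [mulVecLin_apply, mulVec_smul, eq_neg_of_add_eq_zero_left hx, smul_neg, neg_smul, neg_neg,
      smul_smul, inv_mul_cancel₀ hxk, one_smul]

end Field

theorem IsSymm.dotProduct_mulVec_comm {R : Type*} [CommSemiring R] {A : Matrix n n R}
    (hA : A.IsSymm) (v w : n → R) : v ⬝ᵥ (A *ᵥ w) = (A *ᵥ v) ⬝ᵥ w := by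
  rw [dotProduct_mulVec, ← vecMul_transpose, hA.eq]

section CommRing

variable {R : Type*} [CommRing R]

theorem dvd_pow_mulVec_dotProduct [DecidableEq n] (A : Matrix n n R) {d : R} {x w : n → R}
    (h : ∀ k < Fintype.card n, d ∣ (A ^ k *ᵥ x) ⬝ᵥ w) (k : ℕ) : d ∣ (A ^ k *ᵥ x) ⬝ᵥ w := by
  nontriviality R
  rcases isEmpty_or_nonempty n with hn | hn
  · simp [dotProduct]
  have hdeg : (Polynomial.X ^ k %ₘ A.charpoly).natDegree < Fintype.card n := by
    rw [← A.charpoly_natDegree_eq_dim]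
    refine Polynomial.natDegree_modByMonic_lt _ A.charpoly_monic fun h => ?_
    exact Fintype.card_ne_zero (α := n) (by simpa [h] using A.charpoly_natDegree_eq_dim.symm)
  rw [A.pow_eq_aeval_mod_charpoly, Polynomial.aeval_eq_sum_range' hdeg, sum_mulVec,
    sum_dotProduct]
  exact Finset.dvd_sum fun i hi => by
    rw [smul_mulVec, smul_dotProduct, smul_eq_mul]
    exact (h i (Finset.mem_range.1 hi)).mul_left _

theorem sq_dvd_dotProduct_mulVec_sub_mul {A : Matrix n n R} (hA : A.IsSymm) {c d : R}
    {u z : n → R} (hu : A *ᵥ u = c • u + d • z) (huz : d ∣ u ⬝ᵥ z) (a b : R) (x y : n → R) :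
    d ^ 2 ∣ (a • u + d • x) ⬝ᵥ (A *ᵥ (b • u + d • y))
      - c * ((a • u + d • x) ⬝ᵥ (b • u + d • y)) := by
  obtain ⟨t, ht⟩ := huz
  have huy : u ⬝ᵥ (A *ᵥ y) = c * (u ⬝ᵥ y) + d * (z ⬝ᵥ y) := by
    rw [hA.dotProduct_mulVec_comm, hu, add_dotProduct, smul_dotProduct, smul_dotProduct,
      smul_eq_mul, smul_eq_mul]
  have hxu : x ⬝ᵥ (A *ᵥ u) = c * (x ⬝ᵥ u) + d * (x ⬝ᵥ z) := by
    rw [hu, dotProduct_add, dotProduct_smul, dotProduct_smul, smul_eq_mul, smul_eq_mul]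
  have huu : u ⬝ᵥ (A *ᵥ u) = c * (u ⬝ᵥ u) + d * (u ⬝ᵥ z) := by
    rw [hu, dotProduct_add, dotProduct_smul, dotProduct_smul, smul_eq_mul, smul_eq_mul]
  refine ⟨a * b * t + a * (z ⬝ᵥ y) + b * (x ⬝ᵥ z) + (x ⬝ᵥ (A *ᵥ y) - c * (x ⬝ᵥ y)), ?_⟩
  simp only [mulVec_add, mulVec_smul, dotProduct_add, add_dotProduct, dotProduct_smul,
    smul_dotProduct, smul_eq_mul]
  rw [huy, hxu, huu, dotProduct_comm x u]
  linear_combination a * b * d * ht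

theorem sq_dvd_transpose_mul_mul_apply {A : Matrix n n R} (hA : A.IsSymm) {c d : R}
    {u z : n → R} (hu : A *ᵥ u = c • u + d • z) (huz : d ∣ u ⬝ᵥ z) {M : Matrix n o R}
    (hM : ∀ j, ∃ (t : R) (y : n → R), Mᵀ j = t • u + d • y)
    (hMM : ∀ a b, d ^ 2 ∣ (Mᵀ * M) a b) (a b : o) : d ^ 2 ∣ (Mᵀ * A * M) a b := by
  obtain ⟨s, x, hx⟩ := hM a
  obtain ⟨t, y, hy⟩ := hM b
  have hMAM : (Mᵀ * A * M) a b = Mᵀ a ⬝ᵥ (A *ᵥ Mᵀ b) := by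
    rw [Matrix.mul_assoc]
    rfl
  have hMM' : (Mᵀ * M) a b = Mᵀ a ⬝ᵥ Mᵀ b := rfl
  have key := sq_dvd_dotProduct_mulVec_sub_mul hA hu huz s t x y
  rw [← hx, ← hy, ← hMAM, ← hMM'] at key
  exact (dvd_sub_left ((hMM a b).mul_left c)).1 key

end CommRing

end Matrix

variable {m n : Type*}

theorem exists_eq_smul_of_forall_dvd {R : Type*} [Monoid R] {d : R} {w : n → R}
    (h : ∀ i, d ∣ w i) : ∃ y : n → R, w = d • y :=
  ⟨fun i => (h i).choose, funext fun i => (h i).choose_spec⟩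

section ModP

variable {p : ℕ}

theorem intCast_mulVec_eq_zero_iff [Fintype n] (C : Matrix m n ℤ) (w : n → ℤ) :
    C.map (Int.cast : ℤ → ZMod p) *ᵥ (fun i => (w i : ZMod p)) = 0 ↔
      ∀ i, (p : ℤ) ∣ (C *ᵥ w) i := by
  simp only [funext_iff, Pi.zero_apply, ← ZMod.intCast_zmod_eq_zero_iff_dvd]
  refine forall_congr' fun i => ?_
  rw [show ((C *ᵥ w) i : ZMod p) = _ from (Int.castRingHom (ZMod p)).map_mulVec C w i]
  rfl

theorem dvd_mulVec_of_intCast_eq_mul [Fintype n] {C : Matrix m n ℤ} {v x : n → ℤ}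
    (hv : ∀ i, ((C *ᵥ v) i : ZMod p) = 0) {c : ℤ} (hx : ∀ i, (x i : ZMod p) = c * v i) :
    ∀ i, (p : ℤ) ∣ (C *ᵥ x) i := by
  have hxv : (fun i => (x i : ZMod p)) = (c : ZMod p) • fun i => (v i : ZMod p) := funext hx
  rw [← intCast_mulVec_eq_zero_iff, hxv, mulVec_smul,
    (intCast_mulVec_eq_zero_iff C v).2 fun i => (ZMod.intCast_zmod_eq_zero_iff_dvd _ _).1 (hv i),
    smul_zero]

variable [Fact p.Prime]

theorem exists_not_dvd_of_rank_ne_zero [Fintype n] {M : Matrix m n ℤ}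
    (hM : (M.map (Int.cast : ℤ → ZMod p)).rank ≠ 0) : ∃ i j, ¬ (p : ℤ) ∣ M i j := by
  by_contra! h
  refine hM ?_
  rw [show M.map (Int.cast : ℤ → ZMod p) = 0 from
    ext fun i j => (ZMod.intCast_zmod_eq_zero_iff_dvd _ _).2 (h i j), rank_zero]

theorem exists_eq_smul_add_smul_of_dvd_mulVec [Fintype m] [Fintype n] {C : Matrix m n ℤ}
    (hC : (C.map (Int.cast : ℤ → ZMod p)).rank = Fintype.card n - 1) {u x : n → ℤ}
    (hu : ∀ i, (p : ℤ) ∣ (C *ᵥ u) i) (hu0 : ¬ ∀ i, (p : ℤ) ∣ u i)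
    (hx : ∀ i, (p : ℤ) ∣ (C *ᵥ x) i) : ∃ (a : ℤ) (y : n → ℤ), x = a • u + (p : ℤ) • y := by
  have hu0' : (fun i => (u i : ZMod p)) ≠ 0 := by
    simpa [funext_iff, ZMod.intCast_zmod_eq_zero_iff_dvd] using hu0
  obtain ⟨a, ha⟩ := exists_eq_smul_of_mulVec_eq_zero _ hC
    ((intCast_mulVec_eq_zero_iff C u).2 hu) hu0' ((intCast_mulVec_eq_zero_iff C x).2 hx)
  obtain ⟨a, rfl⟩ := ZMod.intCast_surjective a
  obtain ⟨y, hy⟩ := exists_eq_smul_of_forall_dvd (d := (p : ℤ)) (w := x - a • u) fun i => by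
    rw [← ZMod.intCast_zmod_eq_zero_iff_dvd]
    simpa [sub_eq_zero] using congrFun ha i
  exact ⟨a, y, by rw [← hy, add_sub_cancel]⟩

theorem exists_not_dvd_and_det_dvd_transpose_mulVec [Fintype n] [DecidableEq n] [Nonempty n]
    (W : Matrix n n ℤ) (hW : (W.map (Int.cast : ℤ → ZMod p)).rank = Fintype.card n - 1) :
    ∃ u : n → ℤ, (¬ ∀ i, (p : ℤ) ∣ u i) ∧ ∀ j, W.det ∣ (Wᵀ *ᵥ u) j := by
  obtain ⟨k, i, hki⟩ : ∃ k i, (W.map (Int.cast : ℤ → ZMod p)).adjugate k i ≠ 0 := by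
    by_contra! h
    exact adjugate_ne_zero_of_rank_eq _ hW (funext fun k => funext (h k))
  refine ⟨W.adjugate k, fun h => hki ?_, fun j => ?_⟩
  · have hcast := congrFun (congrFun ((Int.castRingHom (ZMod p)).map_adjugate W) k) i
    simp only [RingHom.mapMatrix_apply, map_apply, Int.coe_castRingHom] at hcast
    rw [← hcast, ZMod.intCast_zmod_eq_zero_iff_dvd]
    exact h i
  · rw [mulVec_transpose, ← mul_apply_eq_vecMul, adjugate_mul, Matrix.smul_apply, smul_eq_mul]
    exact dvd_mul_right _ _

theorem dvd_dotProduct_self_of_eq_smul_add_smul [Fintype n] {x u y : n → ℤ} {t : ℤ}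
    (hx : x = t • u + (p : ℤ) • y) (hxx : (p : ℤ) ∣ x ⬝ᵥ x) (hx0 : ¬ ∀ i, (p : ℤ) ∣ x i) :
    (p : ℤ) ∣ u ⬝ᵥ u := by
  have hp : Prime (p : ℤ) := Nat.prime_iff_prime_int.1 Fact.out
  have ht : ¬ (p : ℤ) ∣ t := fun ht => hx0 fun i => by
    rw [hx, Pi.add_apply, Pi.smul_apply, Pi.smul_apply, smul_eq_mul, smul_eq_mul]
    exact dvd_add (ht.mul_right _) (dvd_mul_right _ _)
  have hexp : x ⬝ᵥ x = t ^ 2 * (u ⬝ᵥ u) + p * (2 * t * (u ⬝ᵥ y) + p * (y ⬝ᵥ y)) := by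
    simp only [hx, dotProduct_add, add_dotProduct, dotProduct_smul, smul_dotProduct, smul_eq_mul,
      dotProduct_comm y u]
    ring
  have htuu : (p : ℤ) ∣ t ^ 2 * (u ⬝ᵥ u) := (dvd_add_left (dvd_mul_right _ _)).1 (hexp ▸ hxx)
  exact (hp.dvd_or_dvd htuu).resolve_left fun h => ht (hp.dvd_of_dvd_pow h)

theorem exists_mulVec_eq_smul_add_smul_and_dvd_dotProduct [Fintype m] [Fintype n]
    {C : Matrix m n ℤ} (hC : (C.map (Int.cast : ℤ → ZMod p)).rank = Fintype.card n - 1)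
    {A : Matrix n n ℤ} {u : n → ℤ} (hu0 : ¬ ∀ i, (p : ℤ) ∣ u i)
    (hCu : ∀ i, (p : ℤ) ^ 2 ∣ (C *ᵥ u) i) (hCAu : ∀ i, (p : ℤ) ^ 2 ∣ (C *ᵥ (A *ᵥ u)) i)
    (huu : (p : ℤ) ∣ u ⬝ᵥ u) :
    ∃ (c : ℤ) (z : n → ℤ), A *ᵥ u = c • u + (p : ℤ) • z ∧ (p : ℤ) ∣ u ⬝ᵥ z := by
  have hdvd {w : n → ℤ} (h : ∀ i, (p : ℤ) ^ 2 ∣ (C *ᵥ w) i) (i : m) : (p : ℤ) ∣ (C *ᵥ w) i :=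
    (dvd_pow_self _ two_ne_zero).trans (h i)
  obtain ⟨c, z, hz⟩ := exists_eq_smul_add_smul_of_dvd_mulVec hC (hdvd hCu) hu0 (hdvd hCAu)
  have hCz (i : m) : (p : ℤ) ∣ (C *ᵥ z) i := by
    have hpz : (p : ℤ) * (C *ᵥ z) i = (C *ᵥ (A *ᵥ u)) i - c * (C *ᵥ u) i := by
      rw [hz, mulVec_add, mulVec_smul, mulVec_smul, Pi.add_apply, Pi.smul_apply, Pi.smul_apply,
        smul_eq_mul, smul_eq_mul]
      ring
    have hp0 : (p : ℤ) ≠ 0 := Int.natCast_ne_zero.2 (Fact.out : p.Prime).ne_zero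
    refine (mul_dvd_mul_iff_left hp0).1 ?_
    rw [hpz, ← sq]
    exact dvd_sub (hCAu i) ((hCu i).mul_left c)
  obtain ⟨μ, z', hz'⟩ := exists_eq_smul_add_smul_of_dvd_mulVec hC (hdvd hCu) hu0 hCz
  refine ⟨c, z, hz, ?_⟩
  rw [hz', dotProduct_add, dotProduct_smul, dotProduct_smul, smul_eq_mul, smul_eq_mul]
  exact dvd_add (huu.mul_left μ) (dvd_mul_right _ _)

end ModP

theorem walkMatrix_transpose_mulVec_apply {n : ℕ} (A : Matrix (Fin n) (Fin n) ℤ)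
    (w : Fin n → ℤ) (j : Fin n) :
    ((walkMatrix A)ᵀ *ᵥ w) j = (A ^ (j : ℕ) *ᵥ fun _ => 1) ⬝ᵥ w :=
  rfl

theorem dvd_walkMatrix_transpose_mulVec_mulVec {n : ℕ} {A : Matrix (Fin n) (Fin n) ℤ}
    (hA : A.IsSymm) {d : ℤ} {w : Fin n → ℤ} (h : ∀ j, d ∣ ((walkMatrix A)ᵀ *ᵥ w) j)
    (j : Fin n) : d ∣ ((walkMatrix A)ᵀ *ᵥ (A *ᵥ w)) j := by
  rw [walkMatrix_transpose_mulVec_apply, hA.dotProduct_mulVec_comm, mulVec_mulVec, ← pow_succ']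
  exact dvd_pow_mulVec_dotProduct A (fun k hk => h ⟨k, by simpa using hk⟩) _

section IntegralMultiple

variable [Fintype n] {k : ℕ} {M : Matrix n n ℤ} {Q : Matrix n n ℚ}

theorem map_intCast_transpose_mul_mul_eq_smul (hM : M.map (Int.cast : ℤ → ℚ) = (k : ℚ) • Q)
    (A : Matrix n n ℤ) :
    (Mᵀ * A * M).map (Int.cast : ℤ → ℚ) = (k : ℚ) ^ 2 • (Qᵀ * A.map (Int.cast : ℤ → ℚ) * Q) := by
  have hmul (X Y : Matrix n n ℤ) : (X * Y).map (Int.cast : ℤ → ℚ) =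
      X.map (Int.cast : ℤ → ℚ) * Y.map (Int.cast : ℤ → ℚ) :=
    Matrix.map_mul (f := Int.castRingHom ℚ)
  rw [hmul, hmul, transpose_map, hM, transpose_smul, Matrix.smul_mul, Matrix.smul_mul,
    Matrix.mul_smul, smul_smul, sq]

theorem transpose_mul_self_eq_of_map_eq_smul [DecidableEq n]
    (hM : M.map (Int.cast : ℤ → ℚ) = (k : ℚ) • Q) (hQ : Qᵀ * Q = 1) :
    Mᵀ * M = ((k : ℤ) ^ 2) • 1 := by
  refine map_injective (f := (Int.cast : ℤ → ℚ)) Int.cast_injective ?_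
  have h := map_intCast_transpose_mul_mul_eq_smul hM 1
  rw [Matrix.mul_one, Matrix.map_one _ Int.cast_zero Int.cast_one, Matrix.mul_one, hQ] at h
  dsimp only
  rw [h]
  ext i j
  simp only [map_apply, Matrix.smul_apply, one_apply, smul_eq_mul]
  split_ifs <;> push_cast <;> ring

theorem exists_intCast_eq_transpose_mul_mul_apply (hk : k ≠ 0)
    (hM : M.map (Int.cast : ℤ → ℚ) = (k : ℚ) • Q) (A : Matrix n n ℤ)
    (h : ∀ a b, (k : ℤ) ^ 2 ∣ (Mᵀ * A * M) a b) (a b : n) :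
    ∃ m : ℤ, (Qᵀ * A.map (Int.cast : ℤ → ℚ) * Q) a b = m := by
  obtain ⟨m, hm⟩ := h a b
  refine ⟨m, ?_⟩
  have hab := congrFun (congrFun (map_intCast_transpose_mul_mul_eq_smul hM A) a) b
  rw [map_apply, hm, Matrix.smul_apply, smul_eq_mul] at hab
  push_cast at hab
  exact (mul_left_cancel₀ (pow_ne_zero _ (Nat.cast_ne_zero.2 hk)) hab).symm

end IntegralMultiple

theorem stmt11_general (n p : ℕ) (hp : p.Prime)
    (A : Matrix (Fin n) (Fin n) ℤ) (hA : IsAdjacencyMat A)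
    (hp2 : ((p : ℤ)) ^ 2 ∣ (walkMatrix A).det)
    (hrank : ((walkMatrix A).map (Int.cast : ℤ → ZMod p)).rank = n - 1)
    (v : Fin n → ℤ)
    (hv : ∀ i, ((((walkMatrix A)ᵀ *ᵥ v) i : ℤ) : ZMod p) = 0)
    (Q : Matrix (Fin n) (Fin n) ℚ) (hQ : GeneratedFrom p Q v) :
    ∀ i j, ∃ m : ℤ, (Qᵀ * A.map (Int.cast : ℤ → ℚ) * Q) i j = (m : ℚ) := by
  have : Fact p.Prime := ⟨hp⟩
  obtain ⟨⟨⟨hQQ, -⟩, -, M, hMQ, hMrank⟩, hgen⟩ := hQ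
  obtain ⟨i₀, j₀, hM₀⟩ := exists_not_dvd_of_rank_ne_zero (hMrank ▸ one_ne_zero)
  have : Nonempty (Fin n) := ⟨i₀⟩
  have hW : ((walkMatrix A).map (Int.cast : ℤ → ZMod p)).rank = Fintype.card (Fin n) - 1 := by
    rw [hrank, Fintype.card_fin]
  have hC : ((walkMatrix A)ᵀ.map (Int.cast : ℤ → ZMod p)).rank = Fintype.card (Fin n) - 1 := by
    rw [transpose_map, rank_transpose, hW]
  obtain ⟨u, hu0, hWu⟩ := exists_not_dvd_and_det_dvd_transpose_mulVec _ hW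
  have hWu2 (j : Fin n) : (p : ℤ) ^ 2 ∣ ((walkMatrix A)ᵀ *ᵥ u) j := hp2.trans (hWu j)
  have hcol (j : Fin n) : ∃ (t : ℤ) (y : Fin n → ℤ), Mᵀ j = t • u + (p : ℤ) • y :=
    have ⟨c, hc⟩ := hgen M hMQ j
    exists_eq_smul_add_smul_of_dvd_mulVec hC ((dvd_pow_self _ two_ne_zero).trans <| hWu2 ·) hu0
      (dvd_mulVec_of_intCast_eq_mul hv hc)
  have hMM (a b : Fin n) : (p : ℤ) ^ 2 ∣ (Mᵀ * M) a b := by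
    rw [transpose_mul_self_eq_of_map_eq_smul hMQ hQQ, Matrix.smul_apply, smul_eq_mul]
    exact dvd_mul_right _ _
  obtain ⟨t, y, hy⟩ := hcol j₀
  have huu := dvd_dotProduct_self_of_eq_smul_add_smul hy
    ((dvd_pow_self _ two_ne_zero).trans (hMM j₀ j₀)) fun h => hM₀ (h i₀)
  obtain ⟨c, z, hAu, huz⟩ := exists_mulVec_eq_smul_add_smul_and_dvd_dotProduct hC hu0 hWu2
    (dvd_walkMatrix_transpose_mulVec_mulVec hA.1 hWu2) huu
  exact exists_intCast_eq_transpose_mul_mul_apply hp.ne_zero hMQ A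
    (sq_dvd_transpose_mul_mul_apply hA.1 hAu huz hcol hMM)

theorem stmt11 (n p : ℕ) (hp : p.Prime) (hpodd : Odd p)
    (A : Matrix (Fin n) (Fin n) ℤ) (hA : IsAdjacencyMat A)
    (hctrl : (walkMatrix A).det ≠ 0)
    (hp2 : ((p : ℤ)) ^ 2 ∣ (walkMatrix A).det)
    (hrank : ((walkMatrix A).map (Int.cast : ℤ → ZMod p)).rank = n - 1)
    (v : Fin n → ℤ)
    (hv : ∀ i, ((((walkMatrix A)ᵀ *ᵥ v) i : ℤ) : ZMod p) = 0)
    (hv0 : ∃ i, ((v i : ℤ) : ZMod p) ≠ 0)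
    (Q : Matrix (Fin n) (Fin n) ℚ) (hQ : GeneratedFrom p Q v) :
    ∀ i j, ∃ m : ℤ, (Qᵀ * A.map (Int.cast : ℤ → ℚ) * Q) i j = (m : ℚ) :=
  stmt11_general n p hp A hA hp2 hrank v hv Q hQ
end

section
/- Let p be an odd prime and v an n-dimensional integer vector. If there exists a primitive matrix Q generated from v, then p divides vᵀe and p divides vᵀv, where e is the all-ones vector. -/
open Matrix BigOperators

theorem stmt12 (n p : ℕ) (hp : p.Prime) (hpodd : Odd p) (v : Fin n → ℤ)
    (h : ∃ Q : Matrix (Fin n) (Fin n) ℚ, GeneratedFrom p Q v) :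
    (p : ℤ) ∣ (∑ i, v i) ∧ (p : ℤ) ∣ (∑ i, v i * v i) := by
  haveI : Fact p.Prime := ⟨hp⟩
  obtain ⟨Q, ⟨⟨⟨horth, hreg⟩, _, M, hM, hrank⟩, hcols⟩⟩ := h
  -- entries of M in terms of Q
  have hMQ : ∀ i j, (M i j : ℚ) = (p : ℚ) * Q i j := by
    intro i j
    have := congrFun (congrFun hM i) j
    simpa [Matrix.map_apply, Matrix.smul_apply] using this
  -- Qᵀ e = e
  have hQt : Qᵀ *ᵥ (fun _ => (1 : ℚ)) = fun _ => 1 := by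
    calc Qᵀ *ᵥ (fun _ => (1 : ℚ)) = Qᵀ *ᵥ (Q *ᵥ fun _ => 1) := by rw [hreg]
      _ = (Qᵀ * Q) *ᵥ (fun _ => 1) := by rw [Matrix.mulVec_mulVec]
      _ = fun _ => 1 := by rw [horth]; simp
  -- column sums of M equal p
  have hcolsum : ∀ j, (∑ i, M i j) = (p : ℤ) := by
    intro j
    have hq : ∑ i, Q i j = 1 := by
      have := congrFun hQt j
      simpa [Matrix.mulVec, dotProduct, Matrix.transpose_apply] using this
    have : ((∑ i, M i j : ℤ) : ℚ) = (p : ℚ) := by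
      push_cast
      calc ∑ i, (M i j : ℚ) = ∑ i, (p : ℚ) * Q i j := by
            exact Finset.sum_congr rfl fun i _ => hMQ i j
        _ = (p : ℚ) * ∑ i, Q i j := by rw [Finset.mul_sum]
        _ = (p : ℚ) := by rw [hq, mul_one]
    exact_mod_cast this
  -- column square sums of M equal p²
  have hsqsum : ∀ j, (∑ i, M i j * M i j) = (p : ℤ) ^ 2 := by
    intro j
    have hq : ∑ i, Q i j * Q i j = 1 := by
      have := congrFun (congrFun horth j) j
      simpa [Matrix.mul_apply, Matrix.transpose_apply, Matrix.one_apply] using this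
    have : ((∑ i, M i j * M i j : ℤ) : ℚ) = ((p : ℤ) ^ 2 : ℤ) := by
      push_cast
      calc ∑ i, (M i j : ℚ) * (M i j : ℚ)
          = ∑ i, ((p : ℚ) * Q i j) * ((p : ℚ) * Q i j) := by
            exact Finset.sum_congr rfl fun i _ => by rw [hMQ i j]
        _ = (p : ℚ) ^ 2 * ∑ i, Q i j * Q i j := by
            rw [Finset.mul_sum]; exact Finset.sum_congr rfl fun i _ => by ring
        _ = (p : ℚ) ^ 2 := by rw [hq, mul_one]
    exact_mod_cast this
  -- some entry of M is nonzero mod p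
  have hMne : ∃ i j, ((M i j : ℤ) : ZMod p) ≠ 0 := by
    by_contra hall
    push_neg at hall
    have h0 : M.map (Int.cast : ℤ → ZMod p) = 0 := by
      ext i j; simpa [Matrix.map_apply] using hall i j
    rw [h0, Matrix.rank_zero] at hrank
    exact one_ne_zero hrank.symm
  obtain ⟨i₀, j, hij⟩ := hMne
  obtain ⟨c, hc⟩ := hcols M hM j
  have hcne : (c : ZMod p) ≠ 0 := by
    intro h0
    apply hij
    rw [hc i₀, h0, zero_mul]
  -- sum of v is 0 mod p
  have hs1 : ((∑ i, v i : ℤ) : ZMod p) = 0 := by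
    have key : (c : ZMod p) * ((∑ i, v i : ℤ) : ZMod p) = 0 := by
      push_cast
      rw [Finset.mul_sum]
      have : ∑ i, (c : ZMod p) * ((v i : ℤ) : ZMod p)
          = ∑ i, ((M i j : ℤ) : ZMod p) :=
        Finset.sum_congr rfl fun i _ => (hc i).symm
      rw [this, ← Int.cast_sum, hcolsum j]
      simp
    exact (mul_eq_zero.mp key).resolve_left hcne
  have hs2 : ((∑ i, v i * v i : ℤ) : ZMod p) = 0 := by
    have key : (c : ZMod p) * (c : ZMod p) * ((∑ i, v i * v i : ℤ) : ZMod p) = 0 := by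
      push_cast
      rw [Finset.mul_sum]
      have : ∑ i, (c : ZMod p) * (c : ZMod p) * (((v i : ℤ) : ZMod p) * ((v i : ℤ) : ZMod p))
          = ∑ i, ((M i j : ℤ) : ZMod p) * ((M i j : ℤ) : ZMod p) :=
        Finset.sum_congr rfl fun i _ => by rw [hc i]; ring
      calc ∑ x, (c : ZMod p) * (c : ZMod p) * ((v x : ZMod p) * (v x : ZMod p))
          = ∑ i, ((M i j : ℤ) : ZMod p) * ((M i j : ℤ) : ZMod p) := this
        _ = ((∑ i, M i j * M i j : ℤ) : ZMod p) := by push_cast; rfl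
        _ = (((p : ℤ) ^ 2 : ℤ) : ZMod p) := by rw [hsqsum j]
        _ = 0 := by push_cast; simp
    rcases mul_eq_zero.mp key with h' | h'
    · exact absurd ((mul_self_eq_zero).mp h') hcne
    · exact h'
  exact ⟨(ZMod.intCast_zmod_eq_zero_iff_dvd _ _).mp hs1,
    (ZMod.intCast_zmod_eq_zero_iff_dvd _ _).mp hs2⟩
end

section
/- Let p be an odd prime, v an n-dimensional integer vector each of whose entries is nonzero modulo p, and c₁ an integer with 1 ≤ c₁ ≤ p−1. If u₁ and u₂ are two distinct perfect p-representatives of c₁·v, then u₁ᵀu₂ = 0. -/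
open Matrix BigOperators

/-
Two distinct perfect representatives `u₁, u₂` of the same vector are congruent modulo `p`, so
`p² ∣ ‖u₁ - u₂‖² = 2p² - 2 u₁ᵀu₂`; as `p` is odd, `u₁ᵀu₂ = p² m` for an integer `m`. Then
`‖u₁ ∓ u₂‖² = 2p²(1 ∓ m)` are both positive (`u₁ ≠ u₂`, and `u₁ ≠ -u₂` because both entry sums
equal `p`), which forces `m = 0`.
-/

section DotProduct

variable {ι R : Type*} [Fintype ι]

lemma dotProduct_sub_self_sub [CommRing R] (x y : ι → R) :
    (x - y) ⬝ᵥ (x - y) = x ⬝ᵥ x + y ⬝ᵥ y - 2 * (x ⬝ᵥ y) := by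
  simp only [sub_dotProduct, dotProduct_sub, dotProduct_comm y x]
  ring

lemma dotProduct_add_self_add [CommRing R] (x y : ι → R) :
    (x + y) ⬝ᵥ (x + y) = x ⬝ᵥ x + y ⬝ᵥ y + 2 * (x ⬝ᵥ y) := by
  simp only [add_dotProduct, dotProduct_add, dotProduct_comm y x]
  ring

lemma sq_dvd_dotProduct_self [CommSemiring R] {p : R} {z : ι → R} (h : ∀ i, p ∣ z i) :
    p ^ 2 ∣ z ⬝ᵥ z :=
  Finset.dvd_sum fun i _ => pow_two p ▸ mul_dvd_mul (h i) (h i)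

lemma Int.dotProduct_self_pos {z : ι → ℤ} (h : z ≠ 0) : 0 < z ⬝ᵥ z := by
  simpa using dotProduct_self_star_pos_iff.mpr h

theorem Int.dotProduct_eq_zero_of_modEq {p : ℤ} (hp : Odd p) {x y : ι → ℤ}
    (hxy : ∀ i, x i ≡ y i [ZMOD p]) (hx : x ⬝ᵥ x = p ^ 2) (hy : y ⬝ᵥ y = p ^ 2)
    (hne : x ≠ y) (hne_neg : x ≠ -y) : x ⬝ᵥ y = 0 := by
  have hdvd : p ^ 2 ∣ 2 * (x ⬝ᵥ y) := by
    have hsub := sq_dvd_dotProduct_self (z := x - y) fun i => (hxy i).symm.dvd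
    rw [dotProduct_sub_self_sub, hx, hy] at hsub
    exact (dvd_sub_right (dvd_add dvd_rfl dvd_rfl)).mp hsub
  obtain ⟨m, hm⟩ := (Int.isCoprime_two_right.mpr hp).pow_left.dvd_of_dvd_mul_left hdvd
  have hsub_pos := Int.dotProduct_self_pos (sub_ne_zero.mpr hne)
  have hadd_pos := Int.dotProduct_self_pos (fun h => hne_neg (eq_neg_of_add_eq_zero_left h))
  rw [dotProduct_sub_self_sub, hx, hy, hm] at hsub_pos
  rw [dotProduct_add_self_add, hx, hy, hm] at hadd_pos
  have hm0 : m = 0 := by nlinarith [sq_nonneg p]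
  rw [hm, hm0, mul_zero]

end DotProduct

namespace IsPerfectRep

variable {n p : ℕ} {v v' w w' : Fin n → ℤ}

lemma modEq (hw : IsPerfectRep p v w) (hw' : IsPerfectRep p v w') (i : Fin n) :
    w i ≡ w' i [ZMOD p] :=
  (ZMod.intCast_eq_intCast_iff _ _ _).mp ((hw.1 i).trans (hw'.1 i).symm)

lemma ne_neg (hp : p ≠ 0) (hw : IsPerfectRep p v w) (hw' : IsPerfectRep p v' w') : w ≠ -w' := by
  rintro rfl
  have hsum := hw.2.1
  simp only [Pi.neg_apply, Finset.sum_neg_distrib, hw'.2.1] at hsum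
  omega

end IsPerfectRep

theorem stmt13_general (n p : ℕ) (hpodd : Odd p)
    (v : Fin n → ℤ)
    (c₁ : ℤ)
    (u₁ u₂ : Fin n → ℤ)
    (h₁ : IsPerfectRep p (fun i => c₁ * v i) u₁)
    (h₂ : IsPerfectRep p (fun i => c₁ * v i) u₂)
    (hne : u₁ ≠ u₂) :
    (∑ i, u₁ i * u₂ i) = 0 :=
  Int.dotProduct_eq_zero_of_modEq ((Int.odd_coe_nat p).mpr hpodd) (h₁.modEq h₂) h₁.2.2 h₂.2.2 hne
    (h₁.ne_neg hpodd.pos.ne' h₂)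

theorem stmt13 (n p : ℕ) (hp : p.Prime) (hpodd : Odd p)
    (v : Fin n → ℤ) (hv : ∀ i, ((v i : ℤ) : ZMod p) ≠ 0)
    (c₁ : ℤ) (hc₁ : 1 ≤ c₁) (hc₁' : c₁ ≤ (p : ℤ) - 1)
    (u₁ u₂ : Fin n → ℤ)
    (h₁ : IsPerfectRep p (fun i => c₁ * v i) u₁)
    (h₂ : IsPerfectRep p (fun i => c₁ * v i) u₂)
    (hne : u₁ ≠ u₂) :
    (∑ i, u₁ i * u₂ i) = 0 :=
  stmt13_general n p hpodd v c₁ u₁ u₂ h₁ h₂ hne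
end

section
/- Let p be an odd prime, v an n-dimensional integer vector each of whose entries is nonzero modulo p, and c₁, c₂ two distinct integers with 1 ≤ c₁, c₂ ≤ p−1. If w₁ is a perfect p-representative of c₁·v and w₂ is a perfect p-representative of c₂·v, then w₁ ≠ w₂ and w₁ᵀw₂ = 0. -/
open Matrix BigOperators

theorem stmt14 (n p : ℕ) (hp : p.Prime) (hpodd : Odd p)
    (v : Fin n → ℤ) (hv : ∀ i, ((v i : ℤ) : ZMod p) ≠ 0)
    (c₁ c₂ : ℤ) (hc₁ : 1 ≤ c₁) (hc₁' : c₁ ≤ (p : ℤ) - 1)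
    (hc₂ : 1 ≤ c₂) (hc₂' : c₂ ≤ (p : ℤ) - 1) (hcc : c₁ ≠ c₂)
    (w₁ w₂ : Fin n → ℤ)
    (h₁ : IsPerfectRep p (fun i => c₁ * v i) w₁)
    (h₂ : IsPerfectRep p (fun i => c₂ * v i) w₂) :
    w₁ ≠ w₂ ∧ (∑ i, w₁ i * w₂ i) = 0 := by
  obtain ⟨hm₁, hs₁, hq₁⟩ := h₁
  obtain ⟨hm₂, hs₂, hq₂⟩ := h₂
  have hpZ : Prime (p : ℤ) := by rw [Int.prime_iff_natAbs_prime]; simpa using hp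
  have hppos : (0:ℤ) < p := by exact_mod_cast hp.pos
  have hpc₁ : ¬ (p:ℤ) ∣ c₁ := by
    intro h
    have := Int.eq_zero_of_abs_lt_dvd h (by rw [abs_of_pos (by linarith)]; linarith)
    omega
  have hpc₂ : ¬ (p:ℤ) ∣ c₂ := by
    intro h
    have := Int.eq_zero_of_abs_lt_dvd h (by rw [abs_of_pos (by linarith)]; linarith)
    omega
  have hp2 : ¬ (p:ℤ) ∣ 2 := by
    intro h
    have h2 : (p:ℤ) ≤ 2 := Int.le_of_dvd (by norm_num) h
    have h3 : p ≤ 2 := by exact_mod_cast h2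
    obtain ⟨k, hk⟩ := hpodd
    have := hp.two_le
    omega
  have hccp : ¬ (p:ℤ) ∣ (c₁ - c₂) := by
    intro h
    have := Int.eq_zero_of_abs_lt_dvd h (by rw [abs_sub_lt_iff]; constructor <;> linarith)
    omega
  -- w₁ ≠ w₂
  have hn : 0 < n := by
    rcases Nat.eq_zero_or_pos n with h | h
    · subst h; simp at hs₁; omega
    · exact h
  haveI : Fact p.Prime := ⟨hp⟩
  have hne : w₁ ≠ w₂ := by
    intro h
    obtain ⟨i⟩ := Fin.pos_iff_nonempty.mp hn
    have e1 := hm₁ i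
    have e2 := hm₂ i
    rw [h] at e1
    have : ((c₁ * v i : ℤ) : ZMod p) = ((c₂ * v i : ℤ) : ZMod p) := e1.symm.trans e2
    push_cast at this
    have := mul_right_cancel₀ (hv i) this
    rw [show ((c₁ : ZMod p) = (c₂ : ZMod p)) ↔ _ from ZMod.intCast_eq_intCast_iff c₁ c₂ p,
      Int.ModEq] at this
    exact hccp (Int.ModEq.dvd this.symm)
  refine ⟨hne, ?_⟩
  set s : ℤ := ∑ i, w₁ i * w₂ i with hs
  -- p² ∣ s
  have hdvd : ∀ i, (p:ℤ) ∣ (c₂ * w₁ i - c₁ * w₂ i) := by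
    intro i
    rw [← ZMod.intCast_zmod_eq_zero_iff_dvd]
    push_cast
    have e1 : ((w₁ i : ℤ) : ZMod p) = (c₁ : ZMod p) * (v i : ZMod p) := by
      have := hm₁ i; push_cast at this ⊢; exact this
    have e2 : ((w₂ i : ℤ) : ZMod p) = (c₂ : ZMod p) * (v i : ZMod p) := by
      have := hm₂ i; push_cast at this ⊢; exact this
    rw [e1, e2]; ring
  choose t ht using hdvd
  have hsum : ∑ i, (c₂ * w₁ i - c₁ * w₂ i) * (c₂ * w₁ i - c₁ * w₂ i)
      = (p:ℤ)^2 * ∑ i, t i * t i := by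
    rw [Finset.mul_sum]
    refine Finset.sum_congr rfl fun i _ => ?_
    rw [ht i]; ring
  have hexpand : ∑ i, (c₂ * w₁ i - c₁ * w₂ i) * (c₂ * w₁ i - c₁ * w₂ i)
      = c₂^2 * (∑ i, w₁ i * w₁ i) - 2*c₁*c₂*s + c₁^2 * (∑ i, w₂ i * w₂ i) := by
    rw [hs, Finset.mul_sum, Finset.mul_sum, Finset.mul_sum, ← Finset.sum_sub_distrib,
      ← Finset.sum_add_distrib]
    exact Finset.sum_congr rfl fun i _ => by ring
  have hdvd2 : (p:ℤ)^2 ∣ 2*c₁*c₂*s := by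
    have : 2*c₁*c₂*s = (p:ℤ)^2 * (c₂^2 + c₁^2 - ∑ i, t i * t i) := by
      rw [hexpand, hq₁, hq₂] at hsum; linarith
    exact ⟨_, this⟩
  have hcop : IsCoprime ((p:ℤ)^2) (2*c₁*c₂) := by
    refine IsCoprime.pow_left ?_
    rw [hpZ.coprime_iff_not_dvd]
    intro h
    rcases (hpZ.dvd_mul.mp h) with h | h
    · rcases hpZ.dvd_mul.mp h with h | h
      · exact hp2 h
      · exact hpc₁ h
    · exact hpc₂ h
  have hps : (p:ℤ)^2 ∣ s := hcop.dvd_of_dvd_mul_right (by rwa [mul_comm] at hdvd2)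
  -- bounds
  have hub : s ≤ (p:ℤ)^2 := by
    have h0 : (0:ℤ) ≤ ∑ i, (w₁ i - w₂ i) * (w₁ i - w₂ i) :=
      Finset.sum_nonneg fun i _ => mul_self_nonneg _
    have hex : ∑ i, (w₁ i - w₂ i) * (w₁ i - w₂ i)
        = (∑ i, w₁ i * w₁ i) - 2*s + ∑ i, w₂ i * w₂ i := by
      rw [hs, Finset.mul_sum, ← Finset.sum_sub_distrib, ← Finset.sum_add_distrib]
      exact Finset.sum_congr rfl fun i _ => by ring
    rw [hex, hq₁, hq₂] at h0; linarith
  have hlb : -(p:ℤ)^2 ≤ s := by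
    have h0 : (0:ℤ) ≤ ∑ i, (w₁ i + w₂ i) * (w₁ i + w₂ i) :=
      Finset.sum_nonneg fun i _ => mul_self_nonneg _
    have hex : ∑ i, (w₁ i + w₂ i) * (w₁ i + w₂ i)
        = (∑ i, w₁ i * w₁ i) + 2*s + ∑ i, w₂ i * w₂ i := by
      rw [hs, Finset.mul_sum, ← Finset.sum_add_distrib, ← Finset.sum_add_distrib]
      exact Finset.sum_congr rfl fun i _ => by ring
    rw [hex, hq₁, hq₂] at h0; linarith
  -- exclude ±p²
  have hne_top : s ≠ (p:ℤ)^2 := by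
    intro h
    apply hne
    funext i
    have hex : ∑ i, (w₁ i - w₂ i) * (w₁ i - w₂ i) = 0 := by
      rw [show ∑ i, (w₁ i - w₂ i) * (w₁ i - w₂ i)
          = (∑ i, w₁ i * w₁ i) - 2*s + ∑ i, w₂ i * w₂ i from by
        rw [hs, Finset.mul_sum, ← Finset.sum_sub_distrib, ← Finset.sum_add_distrib]
        exact Finset.sum_congr rfl fun i _ => by ring, hq₁, hq₂, h]
      ring
    have := (Finset.sum_eq_zero_iff_of_nonneg
      (fun i _ => mul_self_nonneg (w₁ i - w₂ i))).mp hex i (Finset.mem_univ i)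
    have := mul_self_eq_zero.mp this
    linarith
  have hne_bot : s ≠ -(p:ℤ)^2 := by
    intro h
    have hex : ∑ i, (w₁ i + w₂ i) * (w₁ i + w₂ i) = 0 := by
      rw [show ∑ i, (w₁ i + w₂ i) * (w₁ i + w₂ i)
          = (∑ i, w₁ i * w₁ i) + 2*s + ∑ i, w₂ i * w₂ i from by
        rw [hs, Finset.mul_sum, ← Finset.sum_add_distrib, ← Finset.sum_add_distrib]
        exact Finset.sum_congr rfl fun i _ => by ring, hq₁, hq₂, h]
      ring
    have hall : ∀ i, w₁ i = -w₂ i := by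
      intro i
      have := (Finset.sum_eq_zero_iff_of_nonneg
        (fun i _ => mul_self_nonneg (w₁ i + w₂ i))).mp hex i (Finset.mem_univ i)
      have := mul_self_eq_zero.mp this
      linarith
    have : (∑ i, w₁ i) = -∑ i, w₂ i := by
      rw [← Finset.sum_neg_distrib]
      exact Finset.sum_congr rfl fun i _ => hall i
    rw [hs₁, hs₂] at this
    omega
  obtain ⟨k, hk⟩ := hps
  have hp2pos : (0:ℤ) < (p:ℤ)^2 := by positivity
  have hk1 : k ≤ 1 := by nlinarith [hub, hk]
  have hk2 : -1 ≤ k := by nlinarith [hlb, hk]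
  interval_cases k
  · exact absurd (by rw [hk]; ring) hne_bot
  · rw [hk]; ring
  · exact absurd (by rw [hk]; ring) hne_top
end

section
/- Let p be an odd prime and v an n-dimensional integer vector each of whose entries is nonzero modulo p. Let w be a perfect p-representative of v and u the shortest p-representative of v. Then the number of indices i with wᵢ ≠ uᵢ is at most 3, and for every index i with wᵢ ≠ uᵢ, either wᵢ = uᵢ + p and uᵢ < 0, or wᵢ = uᵢ − p and uᵢ > 0. -/
open Matrix BigOperators

theorem stmt16 (n p : ℕ) (hp : p.Prime) (hpodd : Odd p)
    (v w u : Fin n → ℤ) (hv : ∀ i, ((v i : ℤ) : ZMod p) ≠ 0)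
    (hw : IsPerfectRep p v w) (hu : IsShortestRep p v u) :
    (Finset.univ.filter fun i => w i ≠ u i).card ≤ 3 ∧
      ∀ i, w i ≠ u i →
        (w i = u i + (p : ℤ) ∧ u i < 0) ∨ (w i = u i - (p : ℤ) ∧ 0 < u i) := by
  obtain ⟨hwmod, hwsum, hwsq⟩ := hw
  obtain ⟨humod, hubd⟩ := hu
  obtain ⟨k, hk⟩ := hpodd
  have hp2 : 2 ≤ p := hp.two_le
  have hk1 : 1 ≤ k := by omega
  have hkZ : (p : ℤ) = 2 * (k : ℤ) + 1 := by exact_mod_cast hk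
  have hubd' : ∀ i, |u i| ≤ (k : ℤ) := by
    intro i
    have := hubd i
    rw [hkZ] at this
    omega
  have hune : ∀ i, u i ≠ 0 := by
    intro i hzero
    apply hv i
    rw [← humod i, hzero]
    simp
  have hwbd : ∀ i, |w i| ≤ (p : ℤ) := by
    intro i
    have h1 : w i * w i ≤ ∑ j, w j * w j :=
      Finset.single_le_sum (fun j _ => mul_self_nonneg (w j)) (Finset.mem_univ i)
    rw [hwsq] at h1
    nlinarith [abs_mul_abs_self (w i), abs_nonneg (w i), (by exact_mod_cast hp.pos : (0:ℤ) < (p:ℤ))]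
  have key : ∀ i, w i = u i ∨ (w i = u i + (p : ℤ) ∧ u i < 0) ∨
      (w i = u i - (p : ℤ) ∧ 0 < u i) := by
    intro i
    have hdvd : (p : ℤ) ∣ w i - u i := by
      have h0 : ((w i - u i : ℤ) : ZMod p) = 0 := by
        push_cast
        rw [hwmod i, humod i]
        ring
      exact_mod_cast (ZMod.intCast_zmod_eq_zero_iff_dvd _ _).mp h0
    obtain ⟨c, hc⟩ := hdvd
    have habs : (p : ℤ) * |c| ≤ (p : ℤ) + (k : ℤ) := by
      have h2 : |w i - u i| ≤ |w i| + |u i| := abs_sub (w i) (u i)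
      rw [hc, abs_mul, abs_of_nonneg (by positivity : (0:ℤ) ≤ (p:ℤ))] at h2
      have := hwbd i
      have := hubd' i
      linarith
    have hc1 : |c| ≤ 1 := by nlinarith [abs_nonneg c]
    rw [abs_le] at hc1
    have hwi := hwbd i
    have hui := hubd' i
    have hu0 := hune i
    have hcases : c = -1 ∨ c = 0 ∨ c = 1 := by omega
    rcases hcases with rfl | rfl | rfl
    · right; right
      constructor
      · linarith [hc]
      · -- w i = u i - p, |w i| ≤ p so u i ≥ 0, u i ≠ 0
        have : w i = u i - (p : ℤ) := by linarith [hc]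
        rw [this] at hwi
        rw [abs_le] at hwi
        omega
    · left; linarith [hc]
    · right; left
      constructor
      · linarith [hc]
      · have : w i = u i + (p : ℤ) := by linarith [hc]
        rw [this] at hwi
        rw [abs_le] at hwi
        omega
  refine ⟨?_, fun i hi => by rcases key i with h | h | h
                             · exact absurd h hi
                             · exact Or.inl h
                             · exact Or.inr h⟩
  by_contra hcard
  push_neg at hcard
  set S := Finset.univ.filter fun i => w i ≠ u i with hS
  have hlb : ∀ i ∈ S, ((k : ℤ) + 1) ^ 2 ≤ w i * w i := by
    intro i hiS
    have hi : w i ≠ u i := (Finset.mem_filter.mp hiS).2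
    have hui := hubd' i
    rw [abs_le] at hui
    rcases key i with h | ⟨h1, h2⟩ | ⟨h1, h2⟩
    · exact absurd h hi
    · rw [h1, hkZ]; nlinarith
    · rw [h1, hkZ]; nlinarith
  have hsum1 : (S.card : ℤ) * ((k : ℤ) + 1) ^ 2 ≤ ∑ i ∈ S, w i * w i := by
    have := Finset.card_nsmul_le_sum S (fun i => w i * w i) (((k : ℤ) + 1) ^ 2) hlb
    rwa [nsmul_eq_mul] at this
  have hsum2 : ∑ i ∈ S, w i * w i ≤ ∑ i, w i * w i :=
    Finset.sum_le_sum_of_subset_of_nonneg (Finset.filter_subset _ _)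
      (fun i _ _ => mul_self_nonneg (w i))
  rw [hwsq] at hsum2
  have hc4 : (4 : ℤ) ≤ (S.card : ℤ) := by exact_mod_cast hcard
  have h4 : (4 : ℤ) * ((k : ℤ) + 1) ^ 2 ≤ (S.card : ℤ) * ((k : ℤ) + 1) ^ 2 := by
    apply mul_le_mul_of_nonneg_right hc4 (by positivity)
  rw [hkZ] at hsum2
  nlinarith [(by exact_mod_cast hk1 : (1:ℤ) ≤ (k:ℤ))]
end

section
/- Let p be an odd prime and v an n-dimensional integer vector each of whose entries is nonzero modulo p, and let u be the shortest p-representative of v. If v has at least one perfect p-representative, then |uᵀe − p| ≤ 3p and uᵀu ≤ p². -/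
open Matrix BigOperators

theorem stmt17 (n p : ℕ) (hp : p.Prime) (hpodd : Odd p)
    (v u : Fin n → ℤ) (hv : ∀ i, ((v i : ℤ) : ZMod p) ≠ 0)
    (hu : IsShortestRep p v u)
    (hex : ∃ w : Fin n → ℤ, IsPerfectRep p v w) :
    |(∑ i, u i) - (p : ℤ)| ≤ 3 * (p : ℤ) ∧ (∑ i, u i * u i) ≤ (p : ℤ) ^ 2 := by 
  obtain ⟨hu_cong, hu_bd⟩ := hu
  obtain ⟨w, hw_cong, hw_sum, hw_sq⟩ := hex
  have hp2 : (2:ℤ) ≤ (p:ℤ) := by exact_mod_cast hp.two_le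
  obtain ⟨m, hm⟩ := hpodd
  have hmz : (p:ℤ) = 2 * (m:ℤ) + 1 := by exact_mod_cast hm
  have hub : ∀ i, 2 * |u i| ≤ (p:ℤ) - 1 := by
    intro i
    have h := hu_bd i
    omega
  have hdvd : ∀ i, (p:ℤ) ∣ (w i - u i) := by
    intro i
    have h0 : ((w i - u i : ℤ) : ZMod p) = 0 := by
      push_cast
      rw [hw_cong i, hu_cong i, sub_self]
    exact (ZMod.intCast_zmod_eq_zero_iff_dvd _ p).mp h0
  have hterm : ∀ i, w i * w i ≤ (p:ℤ)^2 := by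
    intro i
    rw [← hw_sq]
    exact Finset.single_le_sum (fun j _ => mul_self_nonneg (w j)) (Finset.mem_univ i)
  -- if u i ≠ w i then 2|w i| ≥ p + 1
  have hbig : ∀ i, u i ≠ w i → (p:ℤ) + 1 ≤ 2 * |w i| := by
    intro i hne
    obtain ⟨k, hk⟩ := hdvd i
    have hk0 : k ≠ 0 := by
      rintro rfl
      simp only [mul_zero] at hk
      exact hne (by omega)
    have h1 : (p:ℤ) ≤ |w i - u i| := by
      rw [hk, abs_mul, abs_of_nonneg (by positivity : (0:ℤ) ≤ (p:ℤ))]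
      have : (1:ℤ) ≤ |k| := Int.one_le_abs (by exact_mod_cast hk0)
      nlinarith
    have h2 : |w i - u i| ≤ |w i| + |u i| := abs_sub (w i) (u i)
    have := hub i
    omega
  -- each |w i - u i| ≤ p
  have hle : ∀ i, |w i - u i| ≤ (p:ℤ) := by
    intro i
    obtain ⟨k, hk⟩ := hdvd i
    rcases le_or_gt (|k|) 1 with h | h
    · rw [hk, abs_mul, abs_of_nonneg (by positivity : (0:ℤ) ≤ (p:ℤ))]
      nlinarith
    · exfalso
      have h1 : 2 * (p:ℤ) ≤ |w i - u i| := by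
        rw [hk, abs_mul, abs_of_nonneg (by positivity : (0:ℤ) ≤ (p:ℤ))]
        nlinarith
      have h2 : |w i - u i| ≤ |w i| + |u i| := abs_sub (w i) (u i)
      have h3 := hub i
      have h4 : 3 * (p:ℤ) + 1 ≤ 2 * |w i| := by omega
      have h5 := hterm i
      have h6 : |w i| * |w i| = w i * w i := abs_mul_abs_self (w i)
      nlinarith [abs_nonneg (w i)]
  set S : Finset (Fin n) := Finset.univ.filter (fun i => u i ≠ w i) with hS
  have hcard : (S.card : ℤ) ≤ 3 := by
    by_contra hc
    push_neg at hc
    have hc4 : (4:ℤ) ≤ (S.card : ℤ) := by omega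
    have hsumS : ∑ i ∈ S, ((p:ℤ) + 1)^2 ≤ ∑ i ∈ S, 4 * (w i * w i) := by
      apply Finset.sum_le_sum
      intro i hi
      have hne : u i ≠ w i := (Finset.mem_filter.mp hi).2
      have := hbig i hne
      have h6 : |w i| * |w i| = w i * w i := abs_mul_abs_self (w i)
      nlinarith [abs_nonneg (w i)]
    have hsum2 : ∑ i ∈ S, 4 * (w i * w i) ≤ 4 * (p:ℤ)^2 := by
      rw [← hw_sq, Finset.mul_sum]
      apply Finset.sum_le_sum_of_subset_of_nonneg (Finset.subset_univ S)
      intro i _ _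
      nlinarith [mul_self_nonneg (w i)]
    rw [Finset.sum_const, nsmul_eq_mul] at hsumS
    have : (4:ℤ) * ((p:ℤ)+1)^2 ≤ (S.card : ℤ) * ((p:ℤ)+1)^2 := by nlinarith
    nlinarith
  constructor
  · have habs : |(∑ i, u i) - (p:ℤ)| ≤ ∑ i, |u i - w i| := by
      rw [← hw_sum, ← Finset.sum_sub_distrib]
      exact Finset.abs_sum_le_sum_abs _ _
    have heq : ∑ i, |u i - w i| = ∑ i ∈ S, |u i - w i| := by
      symm
      apply Finset.sum_subset (Finset.subset_univ S)
      intro i _ hi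
      simp only [hS, Finset.mem_filter, Finset.mem_univ, true_and, not_not] at hi
      rw [hi, sub_self, abs_zero]
    have hbd : ∑ i ∈ S, |u i - w i| ≤ ∑ i ∈ S, (p:ℤ) := by
      apply Finset.sum_le_sum
      intro i _
      rw [abs_sub_comm]
      exact hle i
    rw [Finset.sum_const, nsmul_eq_mul] at hbd
    have : (S.card : ℤ) * (p:ℤ) ≤ 3 * (p:ℤ) := by nlinarith
    omega
  · rw [← hw_sq]
    apply Finset.sum_le_sum
    intro i _
    by_cases hne : u i = w i
    · rw [hne]
    · have h1 := hbig i hne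
      have h3 := hub i
      have h4 : u i * u i = |u i| * |u i| := (abs_mul_abs_self (u i)).symm
      have h5 : w i * w i = |w i| * |w i| := (abs_mul_abs_self (w i)).symm
      nlinarith [abs_nonneg (u i), abs_nonneg (w i)]
end

section
/- Let p be an odd prime and v an n-dimensional integer vector each of whose entries is nonzero modulo p, and let u be the shortest p-representative of v. Suppose uᵀe − p = s·p for some integer s with −3 ≤ s ≤ 3 and uᵀu ≤ p². Then every perfect p-representative w of v can be written as w = u + Σ_{i∈I} p·eᵢ − Σ_{j∈D} p·eⱼ, where eᵢ denotes the i-th standard unit vector and I and D are disjoint (possibly empty) subsets of the index set {1, …, n} satisfying: (i) |I| + |D| ≤ 3; (ii) |D| − |I| = s; (iii) uᵢ < 0 for every i ∈ I and uⱼ > 0 for every j ∈ D; and (iv) 2p·Σ_{k∈I∪D} |uₖ| = uᵀu + p²·(|I| + |D| − 1). -/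
open Matrix BigOperators

/-
Write `w = u + p d` entrywise. Since `|uᵢ| < p/2` and `wᵢ² ≤ wᵀw = p²`, each `dᵢ` is `0` or `±1`,
and `dᵢ = ±1` forces `uᵢ` to have the opposite sign (as `uᵢ ≠ 0`). A shifted entry has
`|wᵢ| ≥ (p + 1)/2`, so at most three entries fit into `wᵀw = p²`. Comparing `wᵀe` with `uᵀe`
gives `|D| - |I| = s`, and expanding `wᵀw` gives (iv).
-/

open Finset

namespace PerfectRep

section Entry

variable {p u w : ℤ}

theorem eq_or_eq_add_or_eq_sub_of_dvd_sub (hu : |u| ≤ (p - 1) / 2) (hu0 : u ≠ 0)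
    (hw : w * w ≤ p ^ 2) (hdvd : p ∣ w - u) :
    w = u ∨ (w = u + p ∧ u < 0) ∨ (w = u - p ∧ 0 < u) := by
  obtain ⟨d, hd⟩ := hdvd
  obtain ⟨hu₁, hu₂⟩ := abs_le.mp hu
  have h2u₁ : -(p - 1) ≤ 2 * u := by omega
  have h2u₂ : 2 * u ≤ p - 1 := by omega
  have hp : 3 ≤ p := by omega
  have hwd : w = u + p * d := by linarith
  rcases lt_trichotomy d 0 with hneg | rfl | hpos
  · obtain rfl : d = -1 := by
      by_contra hd1
      have : p * d ≤ p * -2 := mul_le_mul_of_nonneg_left (by omega) (by omega)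
      nlinarith
    refine Or.inr (Or.inr ⟨by linarith, ?_⟩)
    by_contra hu_nonpos
    nlinarith [(by omega : u ≤ -1)]
  · exact Or.inl (by linarith)
  · obtain rfl : d = 1 := by
      by_contra hd1
      have : p * 2 ≤ p * d := mul_le_mul_of_nonneg_left (by omega) (by omega)
      nlinarith
    refine Or.inr (Or.inl ⟨by linarith, ?_⟩)
    by_contra hu_nonneg
    nlinarith [(by omega : 1 ≤ u)]

theorem sq_add_one_le_four_mul_mul_self (hu : |u| ≤ (p - 1) / 2) (hw : w = u + p ∨ w = u - p) :
    (p + 1) ^ 2 ≤ 4 * (w * w) := by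
  obtain ⟨hu₁, hu₂⟩ := abs_le.mp hu
  rcases hw with rfl | rfl
  · have h : p + 1 ≤ 2 * (u + p) := by omega
    nlinarith [mul_le_mul h h (by omega) (by omega)]
  · have h : p + 1 ≤ -(2 * (u - p)) := by omega
    nlinarith [mul_le_mul h h (by omega) (by omega)]

end Entry

section Vector

variable {ι : Type*} [Fintype ι] {p : ℤ} {u w : ι → ℤ}

theorem card_le_three_of_sum_mul_self_eq_sq (hp : 0 ≤ p) (S : Finset ι)
    (hww : ∑ i, w i * w i = p ^ 2) (hS : ∀ i ∈ S, (p + 1) ^ 2 ≤ 4 * (w i * w i)) :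
    #S ≤ 3 := by
  have hlower : (#S : ℤ) * (p + 1) ^ 2 ≤ 4 * p ^ 2 := by
    calc (#S : ℤ) * (p + 1) ^ 2 = #S • (p + 1) ^ 2 := (nsmul_eq_mul _ _).symm
      _ ≤ ∑ i ∈ S, 4 * (w i * w i) := card_nsmul_le_sum S _ _ hS
      _ ≤ ∑ i, 4 * (w i * w i) :=
        sum_le_sum_of_subset_of_nonneg (subset_univ S) fun i _ _ => by nlinarith
      _ = 4 * p ^ 2 := by rw [← mul_sum, hww]
  by_contra! hcard
  nlinarith [(by exact_mod_cast hcard : (4 : ℤ) ≤ #S)]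

variable [DecidableEq ι]

theorem exists_shift_of_forall (hp : p ≠ 0)
    (h : ∀ i, w i = u i ∨ (w i = u i + p ∧ u i < 0) ∨ (w i = u i - p ∧ 0 < u i)) :
    ∃ I D : Finset ι, Disjoint I D ∧
      (∀ i, w i = u i + (if i ∈ I then p else 0) - (if i ∈ D then p else 0)) ∧
      (∀ i ∈ I, u i < 0) ∧ (∀ j ∈ D, 0 < u j) := by
  refine ⟨univ.filter (fun i => w i = u i + p), univ.filter (fun i => w i = u i - p),
    disjoint_filter.mpr fun i _ hI hD => hp (by linarith), fun i => ?_, fun i hi => ?_,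
    fun i hi => ?_⟩
  · simp only [mem_filter, mem_univ, true_and]
    rcases h i with h0 | ⟨hI, -⟩ | ⟨hD, -⟩ <;> split_ifs <;> omega
  · have hI := (mem_filter.mp hi).2
    rcases h i with h0 | ⟨-, hu⟩ | ⟨hD, -⟩ <;> first | exact hu | omega
  · have hD := (mem_filter.mp hi).2
    rcases h i with h0 | ⟨hI, -⟩ | ⟨-, hu⟩ <;> first | exact hu | omega

variable {I D : Finset ι}

theorem sum_eq_of_shift
    (hw : ∀ i, w i = u i + (if i ∈ I then p else 0) - (if i ∈ D then p else 0)) :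
    ∑ i, w i = ∑ i, u i + ((#I : ℤ) - #D) * p := by
  simp only [hw, sum_sub_distrib, sum_add_distrib, sum_ite_mem, univ_inter, sum_const,
    nsmul_eq_mul]
  ring

theorem sum_mul_self_eq_of_shift (hID : Disjoint I D)
    (hw : ∀ i, w i = u i + (if i ∈ I then p else 0) - (if i ∈ D then p else 0))
    (hI : ∀ i ∈ I, u i < 0) (hD : ∀ j ∈ D, 0 < u j) :
    ∑ i, w i * w i =
      ∑ i, u i * u i + ((#I : ℤ) + #D) * p ^ 2 - 2 * p * ∑ k ∈ I ∪ D, |u k| := by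
  have hentry : ∀ i, w i * w i =
      u i * u i + (if i ∈ I ∪ D then p ^ 2 - 2 * p * |u i| else 0) := by
    intro i
    rw [hw i]
    by_cases hiI : i ∈ I
    · have hiD : i ∉ D := disjoint_left.mp hID hiI
      simp only [hiI, hiD, mem_union, true_or, if_true, if_false, abs_of_neg (hI i hiI)]
      ring
    · by_cases hiD : i ∈ D
      · simp only [hiI, hiD, mem_union, or_true, if_true, if_false, abs_of_pos (hD i hiD)]
        ring
      · simp [hiI, hiD]
  simp only [hentry, sum_add_distrib, sum_ite_mem, univ_inter, sum_sub_distrib, sum_const,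
    nsmul_eq_mul, ← mul_sum, card_union_of_disjoint hID]
  push_cast
  ring

end Vector

end PerfectRep

open PerfectRep in
theorem stmt18_general (n p : ℕ) (hpodd : Odd p)
    (v u : Fin n → ℤ) (hv : ∀ i, ((v i : ℤ) : ZMod p) ≠ 0)
    (hu : IsShortestRep p v u)
    (s : ℤ) (hs : (∑ i, u i) - (p : ℤ) = s * (p : ℤ))
    (w : Fin n → ℤ) (hw : IsPerfectRep p v w) :
    ∃ I D : Finset (Fin n), Disjoint I D ∧
      (∀ i, w i = u i + (if i ∈ I then (p : ℤ) else 0) - (if i ∈ D then (p : ℤ) else 0)) ∧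
      I.card + D.card ≤ 3 ∧
      ((D.card : ℤ) - (I.card : ℤ) = s) ∧
      (∀ i ∈ I, u i < 0) ∧ (∀ j ∈ D, 0 < u j) ∧
      2 * (p : ℤ) * (∑ k ∈ I ∪ D, |u k|) =
        (∑ i, u i * u i) + (p : ℤ) ^ 2 * ((I.card : ℤ) + (D.card : ℤ) - 1) := by
  obtain ⟨hwv, hwe, hww⟩ := hw
  obtain ⟨huv, hub⟩ := hu
  have hp : (0 : ℤ) < p := by exact_mod_cast hpodd.pos
  have hu0 : ∀ i, u i ≠ 0 := fun i h => hv i (by rw [← huv i, h, Int.cast_zero])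
  have hwi : ∀ i, w i * w i ≤ (p : ℤ) ^ 2 := fun i =>
    hww ▸ single_le_sum (fun j _ => mul_self_nonneg (w j)) (mem_univ i)
  have hdvd : ∀ i, (p : ℤ) ∣ w i - u i := fun i =>
    (ZMod.intCast_eq_intCast_iff_dvd_sub _ _ _).mp ((huv i).trans (hwv i).symm)
  obtain ⟨I, D, hID, hwID, hI, hD⟩ := exists_shift_of_forall hp.ne' fun i =>
    eq_or_eq_add_or_eq_sub_of_dvd_sub (hub i) (hu0 i) (hwi i) (hdvd i)
  have hcard : #(I ∪ D) ≤ 3 := card_le_three_of_sum_mul_self_eq_sq hp.le _ hww fun i hi => by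
    refine sq_add_one_le_four_mul_mul_self (hub i) ?_
    rcases mem_union.mp hi with hiI | hiD
    · exact Or.inl (by simpa [hiI, disjoint_left.mp hID hiI] using hwID i)
    · exact Or.inr (by simpa [hiD, disjoint_right.mp hID hiD] using hwID i)
  have hsum := sum_eq_of_shift hwID
  have hsq := sum_mul_self_eq_of_shift hID hwID hI hD
  refine ⟨I, D, hID, hwID, card_union_of_disjoint hID ▸ hcard, ?_, hI, hD, by linarith⟩
  exact mul_left_injective₀ hp.ne' (by linarith : ((#D : ℤ) - #I) * p = s * p)

theorem stmt18 (n p : ℕ) (hp : p.Prime) (hpodd : Odd p)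
    (v u : Fin n → ℤ) (hv : ∀ i, ((v i : ℤ) : ZMod p) ≠ 0)
    (hu : IsShortestRep p v u)
    (s : ℤ) (hs : (∑ i, u i) - (p : ℤ) = s * (p : ℤ)) (hs₁ : -3 ≤ s) (hs₂ : s ≤ 3)
    (huu : (∑ i, u i * u i) ≤ (p : ℤ) ^ 2)
    (w : Fin n → ℤ) (hw : IsPerfectRep p v w) :
    ∃ I D : Finset (Fin n), Disjoint I D ∧
      (∀ i, w i = u i + (if i ∈ I then (p : ℤ) else 0) - (if i ∈ D then (p : ℤ) else 0)) ∧
      I.card + D.card ≤ 3 ∧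
      ((D.card : ℤ) - (I.card : ℤ) = s) ∧
      (∀ i ∈ I, u i < 0) ∧ (∀ j ∈ D, 0 < u j) ∧
      2 * (p : ℤ) * (∑ k ∈ I ∪ D, |u k|) =
        (∑ i, u i * u i) + (p : ℤ) ^ 2 * ((I.card : ℤ) + (D.card : ℤ) - 1) :=
  stmt18_general n p hpodd v u hv hu s hs w hw
end
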